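/- arXiv:2010.10961 — 8 statements merged into one kernel-verified Lean document; each statement's English description precedes it below -/
import Mathlib

section
/- For every A ∈ ℝ^{kp×kp}, G1 ∈ ℝ^{p×p} and G2 ∈ ℝ^{k×k}, the Frobenius distance from A to the Kronecker product G1 ⊗ G2 equals the Frobenius distance from the rearranged matrix to the corresponding rank-one matrix: ‖A − G1 ⊗ G2‖_F = ‖R(A) − vec(G1) vec(G2)ᵀ‖_F. -/
open Matrix
open scoped Kronecker

noncomputable section

/-- `vec` of a matrix: stacks the columns; entry indexed by (column, row). -/
def vecM {m n : Type*} (B : Matrix m n ℝ) : n × m → ℝ := fun q => B q.2 q.1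

/-- The rearrangement operator `R : ℝ^{kp×kp} → ℝ^{p²×k²}`. -/
def rearr {p k : ℕ} (A : Matrix (Fin p × Fin k) (Fin p × Fin k) ℝ) :
    Matrix (Fin p × Fin p) (Fin k × Fin k) ℝ :=
  Matrix.of fun q r => A (q.2, r.2) (q.1, r.1)

/-- Frobenius norm `‖A‖_F = √(tr(AᵀA))`. -/
def frobNorm {m n : Type*} [Fintype m] [Fintype n] (A : Matrix m n ℝ) : ℝ :=
  Real.sqrt (Matrix.trace (Aᵀ * A))

lemma frobNorm_eq_sum_sq {m n : Type*} [Fintype m] [Fintype n] (A : Matrix m n ℝ) :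
    frobNorm A = Real.sqrt (∑ i : m, ∑ j : n, A i j ^ 2) := by
  unfold frobNorm
  congr 1
  simp only [Matrix.trace, Matrix.diag, Matrix.mul_apply, Matrix.transpose_apply]
  rw [Finset.sum_comm]
  simp [sq]

/-- `‖A − G1 ⊗ G2‖_F = ‖R(A) − vec(G1) vec(G2)ᵀ‖_F`. -/
theorem frobNorm_sub_kronecker_eq {p k : ℕ} (hp : 1 ≤ p) (hk : 1 ≤ k)
    (A : Matrix (Fin p × Fin k) (Fin p × Fin k) ℝ)
    (G1 : Matrix (Fin p) (Fin p) ℝ) (G2 : Matrix (Fin k) (Fin k) ℝ) :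
    frobNorm (A - G1 ⊗ₖ G2) =
      frobNorm (rearr A - Matrix.vecMulVec (vecM G1) (vecM G2)) := by
  rw [frobNorm_eq_sum_sq, frobNorm_eq_sum_sq]
  congr 1
  rw [← Finset.sum_product', ← Finset.sum_product']
  refine Finset.sum_nbij' (fun x => ((x.2.1, x.1.1), (x.2.2, x.1.2)))
    (fun x => ((x.1.2, x.2.2), (x.1.1, x.2.1))) ?_ ?_ ?_ ?_ ?_ <;>
    simp [rearr, vecM, Matrix.vecMulVec_apply, Matrix.kroneckerMap_apply, mul_comm]

end
end

section
/- Let A ∈ ℝ^{m×n} with singular values σ_1(A) ≥ … ≥ σ_q(A), q = min(m,n). Then the infimum over all matrices B ∈ ℝ^{m×n} of rank at most 1 of ‖A − B‖_F² equals Σ_{i=2}^{q} σ_i(A)², and this infimum is attained: for any unit vectors u ∈ ℝ^m, v ∈ ℝ^n with A v = σ_1(A) u and Aᵀ u = σ_1(A) v (such vectors exist), the matrix B = σ_1(A) u vᵀ is a minimizer. -/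
open Matrix Finset
open scoped BigOperators

noncomputable section

/-- Rearrange a tuple of reals in nonincreasing order. -/
def sortedDesc {n : ℕ} (f : Fin n → ℝ) : Fin n → ℝ := fun i => (f ∘ Tuple.sort f) i.rev

/-- The singular values of `A`: the nonnegative square roots of the eigenvalues of `AᵀA`,
listed in nonincreasing order. -/
def svals {m n : Type*} [Fintype m] [Fintype n] [DecidableEq n] (A : Matrix m n ℝ) :
    Fin (Fintype.card n) → ℝ :=
  sortedDesc fun i => Real.sqrt
    ((show (Aᵀ * A).IsHermitian by
        simpa [Matrix.conjTranspose_eq_transpose_of_trivial] using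
          Matrix.isHermitian_conjTranspose_mul_self A).eigenvalues₀ i)

/-- Squared Frobenius norm `‖A‖_F² = tr(AᵀA)`. -/
def frobNormSq {m n : Type*} [Fintype m] [Fintype n] (A : Matrix m n ℝ) : ℝ :=
  Matrix.trace (Aᵀ * A)

/-- `Σ_{i=2}^{min(m,n)} σ_i(A)²`: the sum of the squares of all singular values of `A`
except the largest one (1-based indices `2,…,min(m,n)`, i.e. 0-based `1 ≤ i < min(m,n)`). -/
def tailSq {m n : Type*} [Fintype m] [Fintype n] [DecidableEq n] (A : Matrix m n ℝ) : ℝ :=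
  ∑ i ∈ Finset.univ.filter
      (fun i : Fin (Fintype.card n) =>
        1 ≤ (i : ℕ) ∧ (i : ℕ) < min (Fintype.card m) (Fintype.card n)),
    svals A i ^ 2

/-! ### Auxiliary lemmas -/

lemma sortedDesc_eq_comp {N : ℕ} (f : Fin N → ℝ) :
    sortedDesc f = f ∘ (Fin.revPerm.trans (Tuple.sort f)) := rfl

lemma sortedDesc_anti {N : ℕ} (f : Fin N → ℝ) : Antitone (sortedDesc f) := by
  intro i j hij
  exact Tuple.monotone_sort f (by simpa using Fin.rev_le_rev.mpr hij)

lemma sortedDesc_max {N : ℕ} (f : Fin N → ℝ) (i j : Fin N) (h : (i : ℕ) = 0) :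
    f j ≤ sortedDesc f i := by
  have h1 : sortedDesc f ((Fin.revPerm.trans (Tuple.sort f)).symm j) = f j := by
    rw [sortedDesc_eq_comp]; simp
  have h2 : i ≤ (Fin.revPerm.trans (Tuple.sort f)).symm j := by
    rw [Fin.le_def, h]; exact Nat.zero_le _
  exact h1 ▸ sortedDesc_anti f h2

lemma sum_sortedDesc_sq {N : ℕ} (f : Fin N → ℝ) :
    ∑ i, sortedDesc f i ^ 2 = ∑ i, f i ^ 2 := by
  rw [sortedDesc_eq_comp]
  exact Fintype.sum_equiv _ _ _ (fun i => rfl)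

lemma sortedDesc_zero_of_tail {N : ℕ} (f : Fin N → ℝ) (hf : ∀ i, 0 ≤ f i) (k : ℕ)
    (hcard : (Finset.univ.filter (fun i => f i ≠ 0)).card ≤ k) (i : Fin N) (hi : k ≤ (i : ℕ)) :
    sortedDesc f i = 0 := by
  by_contra h
  have hpos : 0 < sortedDesc f i :=
    lt_of_le_of_ne (by rw [sortedDesc_eq_comp]; exact hf _) (Ne.symm h)
  set e := Fin.revPerm.trans (Tuple.sort f) with he
  have hsub : (Finset.Iic i).image e ⊆ Finset.univ.filter (fun j => f j ≠ 0) := by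
    intro x hx
    simp only [Finset.mem_image, Finset.mem_Iic] at hx
    obtain ⟨j, hj, rfl⟩ := hx
    have : 0 < sortedDesc f j := lt_of_lt_of_le hpos (sortedDesc_anti f hj)
    simp only [Finset.mem_filter, Finset.mem_univ, true_and]
    rw [sortedDesc_eq_comp] at this
    exact ne_of_gt this
  have hcard2 : (Finset.Iic i).card ≤ k := by
    calc (Finset.Iic i).card = ((Finset.Iic i).image e).card :=
          (Finset.card_image_of_injective _ e.injective).symm
      _ ≤ _ := le_trans (Finset.card_le_card hsub) hcard
  rw [Fin.card_Iic] at hcard2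
  omega

section HermAux

variable {n : Type*} [Fintype n] [DecidableEq n]

lemma trace_eq_sum_eigenvalues' {M : Matrix n n ℝ} (hM : M.IsHermitian) :
    M.trace = ∑ i, hM.eigenvalues i := by
  conv_lhs => rw [hM.spectral_theorem]
  rw [Unitary.conjStarAlgAut_apply, Matrix.trace_mul_cycle, Unitary.coe_star_mul_self hM.eigenvectorUnitary, Matrix.one_mul,
    Matrix.trace_diagonal]
  simp

lemma quad_form_le' {M : Matrix n n ℝ} (hM : M.IsHermitian) (c : ℝ)
    (hc : ∀ i, hM.eigenvalues i ≤ c) (y : n → ℝ) :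
    y ⬝ᵥ M.mulVec y ≤ c * (y ⬝ᵥ y) := by
  set U : Matrix n n ℝ := (hM.eigenvectorUnitary : Matrix n n ℝ) with hU
  have hstar : star U = Uᵀ := by
    ext i j; simp [Matrix.star_apply]
  have hUU : U * Uᵀ = 1 := by rw [← hstar]; exact Unitary.coe_mul_star_self _
  set z : n → ℝ := Uᵀ.mulVec y with hz
  have hyU : Matrix.vecMul y U = z := by
    rw [hz]
    ext i
    simp [Matrix.vecMul, Matrix.mulVec, dotProduct, mul_comm]
  have h1 : y ⬝ᵥ M.mulVec y = ∑ i, hM.eigenvalues i * (z i) ^ 2 := by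
    conv_lhs => rw [hM.spectral_theorem, Unitary.conjStarAlgAut_apply, hstar]
    rw [← Matrix.mulVec_mulVec, ← Matrix.mulVec_mulVec, Matrix.dotProduct_mulVec y, hyU]
    simp [Matrix.mulVec_diagonal, dotProduct, sq]
    exact Finset.sum_congr rfl fun i _ => by ring
  have h2 : z ⬝ᵥ z = y ⬝ᵥ y := by
    rw [hz, Matrix.dotProduct_mulVec, Matrix.vecMul_transpose, Matrix.mulVec_mulVec, hUU,
      Matrix.one_mulVec]
  rw [h1, ← h2]
  have h3 : z ⬝ᵥ z = ∑ i, (z i) ^ 2 := by simp [dotProduct, sq]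
  rw [h3, Finset.mul_sum]
  exact Finset.sum_le_sum fun i _ => mul_le_mul_of_nonneg_right (hc i) (sq_nonneg _)

end HermAux

section RankAux

variable {m n : Type*} [Fintype m] [Fintype n] [DecidableEq n]

lemma exists_of_rank_le_one (B : Matrix m n ℝ) (h : B.rank ≤ 1) :
    ∃ (x : m → ℝ) (y : n → ℝ), ∀ i j, B i j = x i * y j := by
  rw [Matrix.rank] at h
  obtain ⟨v₀, hv₀⟩ := finrank_le_one_iff.mp h
  choose c hc using fun j : n => hv₀ ⟨B.mulVecLin (Pi.single j 1), LinearMap.mem_range_self _ _⟩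
  refine ⟨fun i => (v₀ : m → ℝ) i, c, fun i j => ?_⟩
  have hc' : c j • (v₀ : m → ℝ) = B.mulVecLin (Pi.single j 1) := congrArg Subtype.val (hc j)
  have := congrFun hc' i
  simp only [Pi.smul_apply, smul_eq_mul, Matrix.mulVecLin_apply, Matrix.mulVec_single_one, Matrix.col_apply,
    mul_one] at this
  rw [← this, mul_comm]

omit [Fintype m] [DecidableEq n] in
lemma rank_vecMulVec_le' (x : m → ℝ) (y : n → ℝ) : (Matrix.vecMulVec x y).rank ≤ 1 := by
  rw [Matrix.vecMulVec_eq (ι := Unit)]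
  calc (Matrix.replicateCol Unit x * Matrix.replicateRow Unit y).rank ≤ (Matrix.replicateCol Unit x).rank :=
        Matrix.rank_mul_le_left _ _
    _ ≤ 1 := by simpa using Matrix.rank_le_card_width (Matrix.replicateCol Unit x)

end RankAux

section FrobAux

variable {m n : Type*} [Fintype m] [Fintype n]

lemma frobNormSq_eq_sum (C : Matrix m n ℝ) : frobNormSq C = ∑ i, ∑ j, C i j ^ 2 := by
  rw [frobNormSq, Matrix.trace]
  simp only [Matrix.diag, Matrix.mul_apply, Matrix.transpose_apply, sq]
  rw [Finset.sum_comm]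

lemma frob_expand (A : Matrix m n ℝ) (x : m → ℝ) (y : n → ℝ) :
    frobNormSq (A - Matrix.vecMulVec x y) =
      frobNormSq A - 2 * (x ⬝ᵥ A.mulVec y) + (x ⬝ᵥ x) * (y ⬝ᵥ y) := by
  rw [frobNormSq_eq_sum, frobNormSq_eq_sum]
  have key : ∀ i, ∑ j, (A i j - x i * y j) ^ 2 =
      (∑ j, A i j ^ 2) - 2 * (x i * ∑ j, A i j * y j) + x i ^ 2 * ∑ j, y j ^ 2 := by
    intro i
    rw [Finset.mul_sum, Finset.mul_sum, Finset.mul_sum, ← Finset.sum_sub_distrib,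
      ← Finset.sum_add_distrib]
    exact Finset.sum_congr rfl fun j _ => by ring
  have lhs_eq : ∀ i j, (A - Matrix.vecMulVec x y) i j = A i j - x i * y j := by
    intro i j; simp [Matrix.vecMulVec_apply]
  simp only [lhs_eq]
  rw [Finset.sum_congr rfl fun i _ => key i, Finset.sum_add_distrib, Finset.sum_sub_distrib,
    ← Finset.mul_sum, ← Finset.sum_mul]
  simp only [dotProduct, Matrix.mulVec, sq]

end FrobAux

/-- Eckart–Young, rank one: the infimum of `‖A − B‖_F²` over matrices `B` of
rank at most 1 equals `Σ_{i=2}^{min(m,n)} σ_i(A)²` and is attained; moreover singular vectors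
for the largest singular value exist, and for any unit vectors `u, v` with `Av = σ₁u` and
`Aᵀu = σ₁v`, the matrix `B = σ₁ u vᵀ` is a minimizer. -/
theorem rank_one_approximation {m n : ℕ} (hm : 0 < m) (hn : 0 < n)
    (A : Matrix (Fin m) (Fin n) ℝ) :
    (∃ (u : Fin m → ℝ) (v : Fin n → ℝ),
        (∑ i, u i ^ 2) = 1 ∧ (∑ j, v j ^ 2) = 1 ∧
        A.mulVec v = svals A ⟨0, by simpa using hn⟩ • u ∧
        Aᵀ.mulVec u = svals A ⟨0, by simpa using hn⟩ • v) ∧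
    IsLeast {x : ℝ | ∃ B : Matrix (Fin m) (Fin n) ℝ, B.rank ≤ 1 ∧ x = frobNormSq (A - B)}
      (tailSq A) ∧
    (∀ (u : Fin m → ℝ) (v : Fin n → ℝ),
        (∑ i, u i ^ 2) = 1 → (∑ j, v j ^ 2) = 1 →
        A.mulVec v = svals A ⟨0, by simpa using hn⟩ • u →
        Aᵀ.mulVec u = svals A ⟨0, by simpa using hn⟩ • v →
        frobNormSq (A - svals A ⟨0, by simpa using hn⟩ • Matrix.vecMulVec u v) = tailSq A) := by
  classical
  have hM : (Aᵀ * A).IsHermitian := by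
    simpa [Matrix.conjTranspose_eq_transpose_of_trivial] using
      Matrix.isHermitian_conjTranspose_mul_self A
  set i0 : Fin (Fintype.card (Fin n)) := ⟨0, by simpa using hn⟩ with hi0
  set g : Fin (Fintype.card (Fin n)) → ℝ := fun i => Real.sqrt (hM.eigenvalues₀ i) with hg
  have hsvals : svals A = sortedDesc g := rfl
  set e : Fin (Fintype.card (Fin n)) ≃ Fin n :=
    Fintype.equivOfCardEq (Fintype.card_fin _) with he
  have h₀ : ∀ j, hM.eigenvalues₀ j = hM.eigenvalues (e j) := by
    intro j
    rw [Matrix.IsHermitian.eigenvalues]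
    simp [he]
  have hPSD : (Aᵀ * A).PosSemidef := by
    simpa [Matrix.conjTranspose_eq_transpose_of_trivial] using
      Matrix.posSemidef_conjTranspose_mul_self A
  have hlam0 : ∀ j, 0 ≤ hM.eigenvalues₀ j := fun j => by
    rw [h₀ j]; exact hPSD.eigenvalues_nonneg _
  have hg0 : ∀ j, 0 ≤ g j := fun j => Real.sqrt_nonneg _
  have hgsq : ∀ j, g j ^ 2 = hM.eigenvalues₀ j := fun j => Real.sq_sqrt (hlam0 j)
  set s : ℝ := svals A i0 with hs
  have hsg : s = sortedDesc g i0 := by rw [hs, hsvals]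
  have hs0 : 0 ≤ s := by rw [hsg, sortedDesc_eq_comp]; exact hg0 _
  have hsmax : ∀ j, g j ≤ s := fun j => by rw [hsg]; exact sortedDesc_max g i0 j rfl
  have hlamle : ∀ j, hM.eigenvalues₀ j ≤ s ^ 2 := fun j => by
    rw [← hgsq j]; exact pow_le_pow_left₀ (hg0 j) (hsmax j) 2
  have hlamle' : ∀ i : Fin n, hM.eigenvalues i ≤ s ^ 2 := fun i => by
    have := hlamle (e.symm i); rwa [h₀, Equiv.apply_symm_apply] at this
  -- trace identity
  have htrace : Matrix.trace (Aᵀ * A) = ∑ j, (svals A j) ^ 2 := by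
    rw [trace_eq_sum_eigenvalues' hM, hsvals, sum_sortedDesc_sq]
    refine (Fintype.sum_equiv e _ _ fun j => ?_).symm
    rw [hgsq j, h₀ j]
  -- quadratic form bound
  have hquad : ∀ y : Fin n → ℝ, (A.mulVec y) ⬝ᵥ (A.mulVec y) ≤ s ^ 2 * (y ⬝ᵥ y) := by
    intro y
    have h1 : (A.mulVec y) ⬝ᵥ (A.mulVec y) = y ⬝ᵥ ((Aᵀ * A).mulVec y) := by
      rw [← Matrix.mulVec_mulVec, Matrix.dotProduct_mulVec y, Matrix.vecMul_transpose]
    rw [h1]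
    exact quad_form_le' hM _ hlamle' y
  -- tail of singular values vanishes
  have hzero_tail : ∀ j : Fin (Fintype.card (Fin n)), m ≤ (j : ℕ) → svals A j = 0 := by
    intro j hj
    rw [hsvals]
    refine sortedDesc_zero_of_tail g hg0 m ?_ j hj
    have hiff : ∀ j, g j ≠ 0 ↔ hM.eigenvalues₀ j ≠ 0 := fun j =>
      not_congr (Real.sqrt_eq_zero (hlam0 j))
    have h1 : (Finset.univ.filter (fun i => g i ≠ 0)).card =
        (Finset.univ.filter (fun i => hM.eigenvalues₀ i ≠ 0)).card := by
      congr 1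
      exact Finset.filter_congr fun i _ => by rw [hiff]
    rw [h1]
    have h2 : (Finset.univ.filter (fun i => hM.eigenvalues₀ i ≠ 0)).card =
        Fintype.card {i // hM.eigenvalues i ≠ 0} := by
      rw [Fintype.card_subtype]
      refine Finset.card_bij (fun j _ => e j) ?_ ?_ ?_
      · intro j hj
        simp only [Finset.mem_filter, Finset.mem_univ, true_and] at hj ⊢
        rwa [← h₀]
      · intro a ha b hb hab
        exact e.injective hab
      · intro b hb
        refine ⟨e.symm b, ?_, by simp⟩
        simp only [Finset.mem_filter, Finset.mem_univ, true_and] at hb ⊢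
        rwa [h₀, Equiv.apply_symm_apply]
    rw [h2, ← Matrix.IsHermitian.rank_eq_card_non_zero_eigs hM]
    calc (Aᵀ * A).rank ≤ A.rank := Matrix.rank_mul_le_right _ _
      _ ≤ Fintype.card (Fin m) := Matrix.rank_le_card_height A
      _ = m := Fintype.card_fin m
  -- tailSq identity
  have htail : tailSq A = Matrix.trace (Aᵀ * A) - s ^ 2 := by
    rw [htrace, tailSq]
    have hmem : i0 ∈ (Finset.univ : Finset (Fin (Fintype.card (Fin n)))) := Finset.mem_univ _
    rw [← Finset.add_sum_erase _ _ hmem, ← hs]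
    have h1 : ∑ j ∈ Finset.univ.erase i0, svals A j ^ 2 =
        ∑ j ∈ Finset.univ.filter
          (fun i : Fin (Fintype.card (Fin n)) =>
            1 ≤ (i : ℕ) ∧ (i : ℕ) < min (Fintype.card (Fin m)) (Fintype.card (Fin n))),
          svals A j ^ 2 := by
      refine (Finset.sum_subset ?_ ?_).symm
      · intro j hj
        simp only [Finset.mem_filter, Finset.mem_univ, true_and] at hj
        refine Finset.mem_erase.mpr ⟨?_, Finset.mem_univ _⟩
        intro hji
        rw [hji] at hj
        simp [hi0] at hj
      · intro j hj hnot
        simp only [Finset.mem_erase, Finset.mem_univ, and_true] at hj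
        simp only [Finset.mem_filter, Finset.mem_univ, true_and, not_and, not_lt] at hnot
        have hj1 : 1 ≤ (j : ℕ) := by
          rcases Nat.eq_zero_or_pos (j : ℕ) with h0 | h0
          · exfalso; exact hj (Fin.ext (by simp [hi0, h0]))
          · exact h0
        have hmin : min (Fintype.card (Fin m)) (Fintype.card (Fin n)) ≤ (j : ℕ) := hnot hj1
        have hjn : (j : ℕ) < Fintype.card (Fin n) := j.isLt
        have hmj : m ≤ (j : ℕ) := by
          simp only [Fintype.card_fin] at hmin hjn
          omega
        rw [hzero_tail j hmj]
        ring
    rw [h1]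
    ring
  -- lower bound
  have hlb : ∀ B : Matrix (Fin m) (Fin n) ℝ, B.rank ≤ 1 →
      tailSq A ≤ frobNormSq (A - B) := by
    intro B hB
    obtain ⟨p, q, hpq⟩ := exists_of_rank_le_one B hB
    have hBv : B = Matrix.vecMulVec p q := by
      ext i j; rw [hpq, Matrix.vecMulVec_apply]
    rw [hBv, frob_expand, htail]
    set t := p ⬝ᵥ A.mulVec q with ht
    set P := p ⬝ᵥ p with hP
    set Q := q ⬝ᵥ q with hQ
    have hPn : 0 ≤ P := Finset.sum_nonneg fun i _ => mul_self_nonneg _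
    have hQn : 0 ≤ Q := Finset.sum_nonneg fun i _ => mul_self_nonneg _
    have hCS : t ^ 2 ≤ P * ((A.mulVec q) ⬝ᵥ (A.mulVec q)) := by
      have := Finset.sum_mul_sq_le_sq_mul_sq Finset.univ p (A.mulVec q)
      calc t ^ 2 = (∑ i, p i * (A.mulVec q) i) ^ 2 := by rw [ht]; rfl
        _ ≤ (∑ i, p i ^ 2) * ∑ i, (A.mulVec q) i ^ 2 := this
        _ = P * ((A.mulVec q) ⬝ᵥ (A.mulVec q)) := by
            rw [hP]; simp [dotProduct, sq]
    have ht2 : t ^ 2 ≤ s ^ 2 * (P * Q) := by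
      calc t ^ 2 ≤ P * ((A.mulVec q) ⬝ᵥ (A.mulVec q)) := hCS
        _ ≤ P * (s ^ 2 * Q) := mul_le_mul_of_nonneg_left (hquad q) hPn
        _ = s ^ 2 * (P * Q) := by ring
    have hfA : frobNormSq A = Matrix.trace (Aᵀ * A) := rfl
    rw [hfA]
    have h4 : (2 * t) ^ 2 ≤ (s ^ 2 + P * Q) ^ 2 := by
      nlinarith [ht2, sq_nonneg (s ^ 2 - P * Q)]
    have hnn : (0 : ℝ) ≤ s ^ 2 + P * Q := by positivity
    nlinarith [h4, hnn]
  -- part 3: the explicit minimizer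
  have hpart3 : ∀ (u : Fin m → ℝ) (v : Fin n → ℝ),
      (∑ i, u i ^ 2) = 1 → (∑ j, v j ^ 2) = 1 →
      A.mulVec v = s • u → Aᵀ.mulVec u = s • v →
      frobNormSq (A - s • Matrix.vecMulVec u v) = tailSq A := by
    intro u v hu hv hAv hAtu
    have hsm : s • Matrix.vecMulVec u v = Matrix.vecMulVec (s • u) v := by
      ext i j
      simp [Matrix.vecMulVec_apply, mul_assoc]
    have huu : u ⬝ᵥ u = 1 := by
      rw [show u ⬝ᵥ u = ∑ i, u i ^ 2 by simp [dotProduct, sq], hu]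
    have hvv : v ⬝ᵥ v = 1 := by
      rw [show v ⬝ᵥ v = ∑ j, v j ^ 2 by simp [dotProduct, sq], hv]
    rw [hsm, frob_expand, htail]
    have h1 : (s • u) ⬝ᵥ A.mulVec v = s ^ 2 := by
      rw [hAv, smul_dotProduct, dotProduct_smul, huu]
      simp [sq, smul_eq_mul]
    have h2 : (s • u) ⬝ᵥ (s • u) = s ^ 2 := by
      rw [smul_dotProduct, dotProduct_smul, huu]
      simp [sq, smul_eq_mul]
    rw [h1, h2, hvv]
    have hfA : frobNormSq A = Matrix.trace (Aᵀ * A) := rfl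
    rw [hfA]
    ring
  -- existence
  have hexists : ∃ (u : Fin m → ℝ) (v : Fin n → ℝ),
      (∑ i, u i ^ 2) = 1 ∧ (∑ j, v j ^ 2) = 1 ∧
      A.mulVec v = s • u ∧ Aᵀ.mulVec u = s • v := by
    rcases eq_or_lt_of_le hs0 with hsz | hsp
    · -- s = 0, so A = 0
      have hall : ∀ j, g j = 0 := fun j => le_antisymm (hsz ▸ hsmax j) (hg0 j)
      have hA0 : A = 0 := by
        have htr0 : Matrix.trace (Aᵀ * A) = 0 := by
          rw [htrace]
          refine Finset.sum_eq_zero fun j _ => ?_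
          rw [hsvals, sortedDesc_eq_comp]
          have := hall ((Fin.revPerm.trans (Tuple.sort g)) j)
          simp only [Function.comp_apply, this]
          ring
        have hsum : ∑ i, ∑ j, A i j ^ 2 = 0 := by
          rw [← frobNormSq_eq_sum]; exact htr0
        ext i j
        have h1 := (Finset.sum_eq_zero_iff_of_nonneg
          (fun i _ => Finset.sum_nonneg fun j _ => sq_nonneg (A i j))).mp hsum i
          (Finset.mem_univ i)
        have h2 := (Finset.sum_eq_zero_iff_of_nonneg (fun j _ => sq_nonneg (A i j))).mp h1 j
          (Finset.mem_univ j)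
        simpa using sq_eq_zero_iff.mp h2
      refine ⟨Pi.single ⟨0, hm⟩ 1, Pi.single ⟨0, hn⟩ 1, ?_, ?_, ?_, ?_⟩
      · simp [Pi.single_apply, sq]
      · simp [Pi.single_apply, sq]
      · rw [hA0, ← hsz, Matrix.zero_mulVec, zero_smul]
      · rw [hA0, Matrix.transpose_zero, ← hsz, Matrix.zero_mulVec, zero_smul]
    · -- s > 0
      set j0 := (Fin.revPerm.trans (Tuple.sort g)) i0 with hj0
      have hsgj : s = g j0 := by rw [hsg, sortedDesc_eq_comp]; rfl
      have hlameig : hM.eigenvalues (e j0) = s ^ 2 := by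
        rw [← h₀, ← hgsq, hsgj]
      set v : Fin n → ℝ := ⇑(hM.eigenvectorBasis (e j0)) with hvdef
      have hMv : (Aᵀ * A).mulVec v = s ^ 2 • v := by
        rw [hvdef, hM.mulVec_eigenvectorBasis, hlameig]
      have hv1 : ∑ j, v j ^ 2 = 1 := by
        have hnorm : ‖hM.eigenvectorBasis (e j0)‖ = 1 :=
          hM.eigenvectorBasis.orthonormal.1 (e j0)
        rw [EuclideanSpace.norm_eq] at hnorm
        have := Real.sqrt_eq_one.mp hnorm
        simpa [Real.norm_eq_abs, sq_abs] using this
      have hvv : v ⬝ᵥ v = 1 := by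
        rw [show v ⬝ᵥ v = ∑ j, v j ^ 2 by simp [dotProduct, sq], hv1]
      set u : Fin m → ℝ := s⁻¹ • (A.mulVec v) with hudef
      have hsne : s ≠ 0 := ne_of_gt hsp
      have hAv : A.mulVec v = s • u := by
        rw [hudef, smul_smul, mul_inv_cancel₀ hsne, one_smul]
      have hAtu : Aᵀ.mulVec u = s • v := by
        rw [hudef, Matrix.mulVec_smul, Matrix.mulVec_mulVec, hMv, smul_smul]
        congr 1
        field_simp
      have hww : (A.mulVec v) ⬝ᵥ (A.mulVec v) = s ^ 2 := by
        have h1 : (A.mulVec v) ⬝ᵥ (A.mulVec v) = v ⬝ᵥ ((Aᵀ * A).mulVec v) := by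
          rw [← Matrix.mulVec_mulVec, Matrix.dotProduct_mulVec v, Matrix.vecMul_transpose]
        rw [h1, hMv, dotProduct_smul, hvv]
        simp
      have hu1 : ∑ i, u i ^ 2 = 1 := by
        have : ∑ i, u i ^ 2 = u ⬝ᵥ u := by simp [dotProduct, sq]
        rw [this, hudef, smul_dotProduct, dotProduct_smul, hww, smul_eq_mul,
          smul_eq_mul]
        field_simp
      exact ⟨u, v, hu1, hv1, hAv, hAtu⟩
  refine ⟨hexists, ⟨?_, ?_⟩, hpart3⟩
  · -- membership
    obtain ⟨u, v, hu, hv, hAv, hAtu⟩ := hexists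
    refine ⟨s • Matrix.vecMulVec u v, ?_, (hpart3 u v hu hv hAv hAtu).symm⟩
    have hsm : s • Matrix.vecMulVec u v = Matrix.vecMulVec (s • u) v := by
      ext i j
      simp [Matrix.vecMulVec_apply, mul_assoc]
    rw [hsm]
    exact rank_vecMulVec_le' _ _
  · -- lower bound
    rintro x ⟨B, hB, rfl⟩
    exact hlb B hB

end
end

section
/- If A ∈ ℝ^{kp×kp} is symmetric positive definite, then there exist symmetric positive definite matrices G1 ∈ ℝ^{p×p} and G2 ∈ ℝ^{k×k} such that ‖A − G1 ⊗ G2‖_F ≤ ‖A − B1 ⊗ B2‖_F for all matrices B1 ∈ ℝ^{p×p} and B2 ∈ ℝ^{k×k}; that is, the minimization of the Frobenius distance from A to the set of Kronecker products is attained at a pair of symmetric positive definite factors. -/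
open Matrix
open scoped Kronecker

noncomputable section

namespace VLP

/-! ### Generic sum helpers -/

lemma sum_factor {α β : Type*} [Fintype α] [Fintype β] (g : α → ℝ) (h : β → ℝ) :
    (∑ q : α × β, g q.1 * h q.2) = (∑ i, g i) * (∑ j, h j) := by
  rw [Fintype.sum_prod_type, Finset.sum_mul_sum]

lemma sum_sq_eq_zero {n : Type*} [Fintype n] {f : n → ℝ} (h : (∑ i, (f i)^2) = 0) (i : n) :
    f i = 0 := by
  have h2 := (Finset.sum_eq_zero_iff_of_nonneg (fun j _ => sq_nonneg (f j))).mp h i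
    (Finset.mem_univ i)
  exact pow_eq_zero_iff two_ne_zero |>.mp h2

/-! ### Entrywise sum of squares and PSD predicate for plain functions -/

def nsq {n m : ℕ} (X : Fin n → Fin m → ℝ) : ℝ := ∑ q : Fin n × Fin m, (X q.1 q.2)^2

lemma nsq_nonneg {n m : ℕ} (X : Fin n → Fin m → ℝ) : 0 ≤ nsq X :=
  Finset.sum_nonneg fun q _ => sq_nonneg _

lemma nsq_smul {n m : ℕ} (c : ℝ) (X : Fin n → Fin m → ℝ) :
    nsq (fun i j => c * X i j) = c^2 * nsq X := by
  simp [nsq, Finset.mul_sum, mul_pow]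

lemma entry_sq_le_nsq {n m : ℕ} (X : Fin n → Fin m → ℝ) (i : Fin n) (j : Fin m) :
    (X i j)^2 ≤ nsq X :=
  Finset.single_le_sum (f := fun q : Fin n × Fin m => (X q.1 q.2)^2)
    (fun q _ => sq_nonneg _) (Finset.mem_univ (i, j))

lemma eq_zero_of_nsq_eq_zero {n m : ℕ} {X : Fin n → Fin m → ℝ} (h : nsq X = 0)
    (i : Fin n) (j : Fin m) : X i j = 0 := by
  have := entry_sq_le_nsq X i j
  nlinarith [sq_nonneg (X i j)]

def Psd {n : ℕ} (X : Fin n → Fin n → ℝ) : Prop :=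
  (∀ i j, X i j = X j i) ∧ ∀ v : Fin n → ℝ, 0 ≤ ∑ q : Fin n × Fin n, v q.1 * X q.1 q.2 * v q.2

lemma Psd.smul {n : ℕ} {X : Fin n → Fin n → ℝ} (h : Psd X) {c : ℝ} (hc : 0 ≤ c) :
    Psd (fun i j => c * X i j) := by
  refine ⟨fun i j => by simp only []; rw [h.1 i j], fun v => ?_⟩
  have e : (∑ q : Fin n × Fin n, v q.1 * (c * X q.1 q.2) * v q.2)
      = c * ∑ q : Fin n × Fin n, v q.1 * X q.1 q.2 * v q.2 := by
    rw [Finset.mul_sum]; exact Finset.sum_congr rfl fun q _ => by ring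
  rw [e]
  exact mul_nonneg hc (h.2 v)

/-- Orthonormal eigenbasis of a real symmetric matrix, in concrete terms. -/
lemma eig {n : ℕ} (H : Matrix (Fin n) (Fin n) ℝ) (hH : H.IsHermitian) :
    ∃ (c : Fin n → Fin n → ℝ) (μ : Fin n → ℝ),
      (∀ m l, (∑ i, c m i * c l i) = if m = l then 1 else 0) ∧
      (∀ i i', (∑ m, c m i * c m i') = if i = i' then 1 else 0) ∧
      (∀ m i, (∑ i', H i i' * c m i') = μ m * c m i) := by
  set U : Matrix (Fin n) (Fin n) ℝ := (hH.eigenvectorUnitary : Matrix (Fin n) (Fin n) ℝ) with hU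
  have hstar : star U = Uᵀ := by
    ext i j
    simp [star_apply]
  have h1 : star U * U = 1 := Unitary.coe_star_mul_self hH.eigenvectorUnitary
  have h2 : U * star U = 1 := Unitary.coe_mul_star_self hH.eigenvectorUnitary
  have hspec : H * U = U * diagonal hH.eigenvalues := by
    have := hH.spectral_theorem
    have h3 : diagonal (RCLike.ofReal ∘ hH.eigenvalues) = diagonal hH.eigenvalues := by
      ext i j; simp [diagonal]
    conv_lhs => rw [this, h3, Unitary.conjStarAlgAut_apply]
    rw [mul_assoc, h1, mul_one]
  refine ⟨fun m i => U i m, hH.eigenvalues, ?_, ?_, ?_⟩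
  · intro m l
    have := congr_fun (congr_fun h1 m) l
    rw [Matrix.mul_apply] at this
    rw [Matrix.one_apply] at this
    rw [← this]
    refine Finset.sum_congr rfl fun i _ => ?_
    rw [hstar]
    simp [Matrix.transpose_apply, mul_comm]
  · intro i i'
    have := congr_fun (congr_fun h2 i) i'
    rw [Matrix.mul_apply] at this
    rw [Matrix.one_apply] at this
    rw [← this]
    refine Finset.sum_congr rfl fun m _ => ?_
    rw [hstar]
    simp [Matrix.transpose_apply]
  · intro m i
    have := congr_fun (congr_fun hspec i) m
    rw [Matrix.mul_apply, Matrix.mul_diagonal] at this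
    rw [this]
    ring

lemma svd_decomp {n : ℕ} (X : Fin n → Fin n → ℝ) :
    ∃ (s : Fin n → ℝ) (av c : Fin n → Fin n → ℝ),
      (∀ m, 0 ≤ s m) ∧
      (∀ m l, (∑ i, c m i * c l i) = if m = l then 1 else 0) ∧
      (∀ m l, (∑ i, av m i * av l i) = if (m = l ∧ s m ≠ 0) then 1 else 0) ∧
      (∀ i i', X i i' = ∑ m, s m * av m i * c m i') ∧
      ((∑ m, (s m)^2) = nsq X) := by
  classical
  set H : Matrix (Fin n) (Fin n) ℝ := Matrix.of (fun i i' => ∑ t, X t i * X t i') with hHdef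
  have hHsym : ∀ i i', H i i' = H i' i := by
    intro i i'; simp only [hHdef, Matrix.of_apply]
    exact Finset.sum_congr rfl fun t _ => mul_comm _ _
  have hH : H.IsHermitian := by
    ext i j
    simp only [Matrix.conjTranspose_apply, star_trivial]
    exact hHsym j i
  obtain ⟨c, μ, hco, hcc, heig⟩ := eig H hH
  set w : Fin n → Fin n → ℝ := fun m i => ∑ i', X i i' * c m i' with hwdef
  -- helper A : ∑ i, X i i'' * w m i = μ m * c m i''
  have hA : ∀ m i'', (∑ i, X i i'' * w m i) = μ m * c m i'' := by
    intro m i''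
    have e1 : (∑ i, X i i'' * w m i) = ∑ i, ∑ i', X i i'' * (X i i' * c m i') := by
      refine Finset.sum_congr rfl fun i _ => ?_
      rw [hwdef]; exact Finset.mul_sum _ _ _
    rw [e1, Finset.sum_comm]
    have e2 : ∀ i', (∑ i, X i i'' * (X i i' * c m i')) = H i'' i' * c m i' := by
      intro i'
      show _ = (∑ t, X t i'' * X t i') * c m i'
      rw [Finset.sum_mul]
      exact Finset.sum_congr rfl fun i _ => by ring
    rw [Finset.sum_congr rfl fun i' _ => e2 i']
    exact heig m i''
  -- key1 : ∑ i, w m i * w l i = μ m * δ_{ml}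
  have key1 : ∀ m l, (∑ i, w m i * w l i) = μ m * (if m = l then 1 else 0) := by
    intro m l
    have e1 : (∑ i, w m i * w l i) = ∑ i, ∑ i'', w m i * (X i i'' * c l i'') := by
      refine Finset.sum_congr rfl fun i _ => ?_
      conv_lhs => rw [hwdef]
      exact Finset.mul_sum _ _ _
    rw [e1, Finset.sum_comm]
    have e2 : ∀ i'', (∑ i, w m i * (X i i'' * c l i'')) = (μ m * c m i'') * c l i'' := by
      intro i''
      rw [← hA m i'', Finset.sum_mul]
      exact Finset.sum_congr rfl fun i _ => by ring
    rw [Finset.sum_congr rfl fun i'' _ => e2 i'']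
    have : (∑ i'', μ m * c m i'' * c l i'') = μ m * ∑ i'', c m i'' * c l i'' := by
      rw [Finset.mul_sum]
      exact Finset.sum_congr rfl fun i _ => by ring
    rw [this, hco m l]
  have hμ : ∀ m, μ m = ∑ i, (w m i)^2 := by
    intro m
    have := key1 m m
    simp at this
    rw [← this]
    exact Finset.sum_congr rfl fun i _ => (pow_two (w m i)).symm
  have hμnn : ∀ m, 0 ≤ μ m := fun m => (hμ m) ▸ Finset.sum_nonneg fun i _ => sq_nonneg _
  set s : Fin n → ℝ := fun m => Real.sqrt (μ m) with hsdef
  have hs2 : ∀ m, s m ^ 2 = μ m := fun m => Real.sq_sqrt (hμnn m)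
  set av : Fin n → Fin n → ℝ := fun m i => if s m = 0 then 0 else (s m)⁻¹ * w m i with havdef
  have hw_av : ∀ m i, w m i = s m * av m i := by
    intro m i
    by_cases h0 : s m = 0
    · have hμ0 : μ m = 0 := by rw [← hs2 m, h0]; ring
      have hw0 : w m i = 0 := sum_sq_eq_zero (by rw [← hμ m]; exact hμ0) i
      simp [havdef, h0, hw0]
    · simp only [havdef, if_neg h0]
      field_simp
  -- decomposition
  have hdec : ∀ i i', X i i' = ∑ m, w m i * c m i' := by
    intro i i'
    have e1 : (∑ m, w m i * c m i') = ∑ m, ∑ t, (X i t * c m t) * c m i' := by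
      refine Finset.sum_congr rfl fun m _ => ?_
      rw [hwdef, Finset.sum_mul]
    rw [e1, Finset.sum_comm]
    have e2 : ∀ t, (∑ m, (X i t * c m t) * c m i') = X i t * (if t = i' then 1 else 0) := by
      intro t
      rw [← hcc t i', Finset.mul_sum]
      exact Finset.sum_congr rfl fun m _ => by ring
    rw [Finset.sum_congr rfl fun t _ => e2 t]
    simp
  refine ⟨s, av, c, fun m => Real.sqrt_nonneg _, hco, ?_, ?_, ?_⟩
  · intro m l
    by_cases h0 : s m = 0
    · simp [havdef, h0]
    by_cases h1 : s l = 0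
    · have hfalse : ¬(m = l ∧ s m ≠ 0) := by
        rintro ⟨hml, hm0⟩; subst hml; exact hm0 h1
      simp [havdef, h1, hfalse]
    · have e1 : (∑ i, av m i * av l i) = (s m)⁻¹ * (s l)⁻¹ * ∑ i, w m i * w l i := by
        rw [Finset.mul_sum]
        refine Finset.sum_congr rfl fun i _ => ?_
        simp [havdef, h0, h1]; ring
      rw [e1, key1 m l]
      by_cases hml : m = l
      · subst hml
        simp [h0, ← hs2 m]
        field_simp
      · simp [hml]
  · intro i i'
    rw [hdec i i']
    exact Finset.sum_congr rfl fun m _ => by rw [hw_av m i]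
  · -- ∑ s² = nsq X
    have hHdec : ∀ i i', H i i' = ∑ m, μ m * c m i * c m i' := by
      intro i i'
      have e1 : (∑ m, μ m * c m i * c m i') = ∑ m, (∑ t, H i t * c m t) * c m i' := by
        refine Finset.sum_congr rfl fun m _ => ?_
        rw [heig m i]
      rw [e1]
      have e2 : (∑ m, (∑ t, H i t * c m t) * c m i') = ∑ m, ∑ t, H i t * (c m t * c m i') := by
        refine Finset.sum_congr rfl fun m _ => ?_
        rw [Finset.sum_mul]
        exact Finset.sum_congr rfl fun t _ => by ring
      rw [e2, Finset.sum_comm]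
      have e3 : ∀ t, (∑ m, H i t * (c m t * c m i')) = H i t * (if t = i' then 1 else 0) := by
        intro t
        rw [← hcc t i', Finset.mul_sum]
      rw [Finset.sum_congr rfl fun t _ => e3 t]
      simp
    have htr : nsq X = ∑ i', H i' i' := by
      rw [nsq, Fintype.sum_prod_type, Finset.sum_comm]
      refine Finset.sum_congr rfl fun i' _ => ?_
      simp only [hHdef, Matrix.of_apply]
      exact Finset.sum_congr rfl fun t _ => (sq (X t i')) ▸ rfl
    rw [htr]
    have e4 : (∑ i', H i' i') = ∑ i', ∑ m, μ m * c m i' * c m i' := by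
      exact Finset.sum_congr rfl fun i' _ => hHdec i' i'
    rw [e4, Finset.sum_comm]
    refine Finset.sum_congr rfl fun m _ => ?_
    have : (∑ i', μ m * c m i' * c m i') = μ m * ∑ i', c m i' * c m i' := by
      rw [Finset.mul_sum]
      exact Finset.sum_congr rfl fun i' _ => by ring
    rw [this, hco m m]
    simp [hs2 m]


variable {p k : ℕ}


/-- the pairing `⟨A, X ⊗ Y⟩` -/
def F (a : Fin p × Fin k → Fin p × Fin k → ℝ) (X : Fin p → Fin p → ℝ)
    (Y : Fin k → Fin k → ℝ) : ℝ :=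
  ∑ q : (Fin p × Fin p) × (Fin k × Fin k),
    X q.1.1 q.1.2 * Y q.2.1 q.2.2 * a (q.1.1, q.2.1) (q.1.2, q.2.2)

def B (a : Fin p × Fin k → Fin p × Fin k → ℝ) (z w : Fin p × Fin k → ℝ) : ℝ :=
  ∑ e : (Fin p × Fin k) × (Fin p × Fin k), z e.1 * a e.1 e.2 * w e.2

def Q (a : Fin p × Fin k → Fin p × Fin k → ℝ) (z : Fin p × Fin k → ℝ) : ℝ := B a z z

def tens (u : Fin p → ℝ) (v : Fin k → ℝ) : Fin p × Fin k → ℝ := fun e => u e.1 * v e.2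

def reix : ((Fin p × Fin p) × (Fin k × Fin k)) ≃ ((Fin p × Fin k) × (Fin p × Fin k)) where
  toFun q := ((q.1.1, q.2.1), (q.1.2, q.2.2))
  invFun e := ((e.1.1, e.2.1), (e.1.2, e.2.2))
  left_inv q := rfl
  right_inv e := rfl

lemma F_congr (a : Fin p × Fin k → Fin p × Fin k → ℝ) {X X' : Fin p → Fin p → ℝ}
    {Y Y' : Fin k → Fin k → ℝ} (hX : ∀ i i', X i i' = X' i i')
    (hY : ∀ j j', Y j j' = Y' j j') : F a X Y = F a X' Y' := by
  unfold F
  exact Finset.sum_congr rfl fun q _ => by rw [hX, hY]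

lemma F_sum_left (a : Fin p × Fin k → Fin p × Fin k → ℝ) {N : ℕ}
    (M : Fin N → Fin p → Fin p → ℝ) (Y : Fin k → Fin k → ℝ) :
    F a (fun i i' => ∑ m, M m i i') Y = ∑ m, F a (M m) Y := by
  unfold F
  simp only [Finset.sum_mul]
  exact Finset.sum_comm

lemma F_sum_right (a : Fin p × Fin k → Fin p × Fin k → ℝ) {N : ℕ}
    (X : Fin p → Fin p → ℝ) (M : Fin N → Fin k → Fin k → ℝ) :
    F a X (fun j j' => ∑ m, M m j j') = ∑ m, F a X (M m) := by
  unfold F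
  simp only [Finset.mul_sum, Finset.sum_mul]
  exact Finset.sum_comm

lemma F_smul_left (a : Fin p × Fin k → Fin p × Fin k → ℝ) (t : ℝ)
    (X : Fin p → Fin p → ℝ) (Y : Fin k → Fin k → ℝ) :
    F a (fun i i' => t * X i i') Y = t * F a X Y := by
  unfold F
  rw [Finset.mul_sum]
  exact Finset.sum_congr rfl fun q _ => by ring

lemma F_smul_right (a : Fin p × Fin k → Fin p × Fin k → ℝ) (t : ℝ)
    (X : Fin p → Fin p → ℝ) (Y : Fin k → Fin k → ℝ) :
    F a X (fun j j' => t * Y j j') = t * F a X Y := by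
  unfold F
  rw [Finset.mul_sum]
  exact Finset.sum_congr rfl fun q _ => by ring

lemma F_outer (a : Fin p × Fin k → Fin p × Fin k → ℝ) (u u' : Fin p → ℝ)
    (v v' : Fin k → ℝ) :
    F a (fun i i' => u i * u' i') (fun j j' => v j * v' j')
      = B a (tens u v) (tens u' v') := by
  unfold F B tens
  exact Fintype.sum_equiv reix _ _ fun q => by simp only [reix, Equiv.coe_fn_mk]; ring

lemma B_swap {a : Fin p × Fin k → Fin p × Fin k → ℝ}
    (hsym : ∀ e f, a e f = a f e) (z w : Fin p × Fin k → ℝ) : B a z w = B a w z := by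
  unfold B
  exact Fintype.sum_equiv (Equiv.prodComm _ _) _ _ fun e => by
    simp only [Equiv.prodComm_apply, Prod.swap]
    rw [hsym e.2 e.1]; ring

lemma two_B_le {a : Fin p × Fin k → Fin p × Fin k → ℝ}
    (hsym : ∀ e f, a e f = a f e) (hQ : ∀ z, 0 ≤ Q a z) (z w : Fin p × Fin k → ℝ) :
    2 * B a z w ≤ Q a z + Q a w := by
  have h := hQ (z - w)
  have hzw : B a w z = B a z w := B_swap hsym w z
  have hexp : Q a (z - w) = Q a z - B a z w - B a w z + Q a w := by
    unfold Q B
    simp only [Pi.sub_apply]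
    rw [← Finset.sum_sub_distrib, ← Finset.sum_sub_distrib, ← Finset.sum_add_distrib]
    exact Finset.sum_congr rfl fun e _ => by ring
  rw [hexp, hzw] at h
  linarith



/-! ### Sums of weighted outer products -/

lemma sq_sum_prod {N : ℕ} (g : Fin N → ℝ) :
    (∑ m, g m)^2 = ∑ r : Fin N × Fin N, g r.1 * g r.2 := by
  rw [sq, ← sum_factor]

lemma outer_psd_sum {n N : ℕ} (s : Fin N → ℝ) (hs : ∀ m, 0 ≤ s m)
    (u : Fin N → Fin n → ℝ) :
    Psd (fun i i' => ∑ m, s m * (u m i * u m i')) := by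
  constructor
  · intro i j; simp only []
    exact Finset.sum_congr rfl fun m _ => by ring
  · intro v
    have e1 : (∑ q : Fin n × Fin n, v q.1 * (∑ m, s m * (u m q.1 * u m q.2)) * v q.2)
        = ∑ m, ∑ q : Fin n × Fin n, s m * ((v q.1 * u m q.1) * (v q.2 * u m q.2)) := by
      rw [Finset.sum_comm]
      refine Finset.sum_congr rfl fun q _ => ?_
      rw [Finset.mul_sum, Finset.sum_mul]
      exact Finset.sum_congr rfl fun m _ => by ring
    rw [e1]
    refine Finset.sum_nonneg fun m _ => ?_
    have e2 : (∑ q : Fin n × Fin n, s m * ((v q.1 * u m q.1) * (v q.2 * u m q.2)))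
        = s m * ((∑ i, v i * u m i) * (∑ i, v i * u m i)) := by
      rw [← sum_factor (fun i => v i * u m i) (fun i => v i * u m i), Finset.mul_sum]
    rw [e2]
    exact mul_nonneg (hs m) (mul_self_nonneg _)

lemma nsq_outer_le {n N : ℕ} (s : Fin N → ℝ) (hs : ∀ m, 0 ≤ s m)
    (u : Fin N → Fin n → ℝ)
    (horth : ∀ m l, m ≠ l → (∑ i, u m i * u l i) = 0)
    (hdiag : ∀ m, (∑ i, u m i * u m i) ≤ 1) :
    nsq (fun i i' => ∑ m, s m * (u m i * u m i')) ≤ ∑ m, (s m)^2 := by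
  set D : Fin N → Fin N → ℝ := fun m l => ∑ i, u m i * u l i with hD
  have e1 : nsq (fun i i' => ∑ m, s m * (u m i * u m i'))
      = ∑ r : Fin N × Fin N, (s r.1 * s r.2) * (D r.1 r.2 * D r.1 r.2) := by
    unfold nsq
    have e2 : ∀ q : Fin n × Fin n, ((∑ m, s m * (u m q.1 * u m q.2)))^2
        = ∑ r : Fin N × Fin N, (s r.1 * s r.2) *
            ((u r.1 q.1 * u r.2 q.1) * (u r.1 q.2 * u r.2 q.2)) := by
      intro q
      rw [sq_sum_prod]
      exact Finset.sum_congr rfl fun r _ => by ring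
    rw [Finset.sum_congr rfl fun q _ => e2 q, Finset.sum_comm]
    refine Finset.sum_congr rfl fun r _ => ?_
    rw [← Finset.mul_sum, sum_factor (fun i => u r.1 i * u r.2 i) (fun i => u r.1 i * u r.2 i)]
  rw [e1, Fintype.sum_prod_type]
  refine Finset.sum_le_sum fun m _ => ?_
  have e3 : ∀ l, (s m * s l) * (D m l * D m l)
      = if l = m then (s m * s m) * (D m m * D m m) else 0 := by
    intro l
    by_cases h : l = m
    · subst h; simp
    · have := horth m l (fun hml => h hml.symm)
      rw [hD] at *
      simp [this, h]
  rw [Finset.sum_congr rfl fun l _ => e3 l, Finset.sum_ite_eq' Finset.univ m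
    (fun _ => (s m * s m) * (D m m * D m m))]
  simp only [Finset.mem_univ, if_true]
  have hD0 : 0 ≤ D m m := Finset.sum_nonneg fun i _ => mul_self_nonneg _
  have hD1 : D m m ≤ 1 := hdiag m
  have haux : 0 ≤ (s m * s m) * ((1 - D m m) * (1 + D m m)) :=
    mul_nonneg (mul_self_nonneg _) (mul_nonneg (by linarith) (by linarith))
  nlinarith [haux]

/-! ### Bilinear decomposition of F -/

lemma F_bidecomp (a : Fin p × Fin k → Fin p × Fin k → ℝ) {N1 N2 : ℕ}
    (s : Fin N1 → ℝ) (t : Fin N2 → ℝ)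
    (u1 u2 : Fin N1 → Fin p → ℝ) (v1 v2 : Fin N2 → Fin k → ℝ) :
    F a (fun i i' => ∑ m, s m * (u1 m i * u2 m i'))
        (fun j j' => ∑ n, t n * (v1 n j * v2 n j'))
      = ∑ m, ∑ n, (s m * t n) * B a (tens (u1 m) (v1 n)) (tens (u2 m) (v2 n)) := by
  rw [F_sum_left a (fun m i i' => s m * (u1 m i * u2 m i'))]
  refine Finset.sum_congr rfl fun m _ => ?_
  rw [F_sum_right a _ (fun n j j' => t n * (v1 n j * v2 n j'))]
  refine Finset.sum_congr rfl fun n _ => ?_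
  calc F a (fun i i' => s m * (u1 m i * u2 m i')) (fun j j' => t n * (v1 n j * v2 n j'))
      = s m * F a (fun i i' => u1 m i * u2 m i') (fun j j' => t n * (v1 n j * v2 n j')) :=
        F_smul_left a (s m) _ _
    _ = s m * (t n * F a (fun i i' => u1 m i * u2 m i') (fun j j' => v1 n j * v2 n j')) := by
        rw [F_smul_right]
    _ = (s m * t n) * B a (tens (u1 m) (v1 n)) (tens (u2 m) (v2 n)) := by
        rw [F_outer]; ring

/-! ### The general bound from the PSD bound -/

lemma gen_bound (a : Fin p × Fin k → Fin p × Fin k → ℝ)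
    (hsym : ∀ e f, a e f = a f e) (hQ : ∀ z, 0 ≤ Q a z) (σ : ℝ) (hσ : 0 ≤ σ)
    (hb : ∀ X Y, Psd X → Psd Y → F a X Y ≤ σ * Real.sqrt (nsq X) * Real.sqrt (nsq Y))
    (X : Fin p → Fin p → ℝ) (Y : Fin k → Fin k → ℝ) :
    F a X Y ≤ σ * Real.sqrt (nsq X) * Real.sqrt (nsq Y) := by
  obtain ⟨s, av, c, hs, hcorth, havorth, hXdec, hssq⟩ := svd_decomp X
  obtain ⟨t, bv, d, ht, hdorth, hbvorth, hYdec, htsq⟩ := svd_decomp Y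
  set X1 : Fin p → Fin p → ℝ := fun i i' => ∑ m, s m * (av m i * av m i') with hX1
  set X2 : Fin p → Fin p → ℝ := fun i i' => ∑ m, s m * (c m i * c m i') with hX2
  set Y1 : Fin k → Fin k → ℝ := fun j j' => ∑ n, t n * (bv n j * bv n j') with hY1
  set Y2 : Fin k → Fin k → ℝ := fun j j' => ∑ n, t n * (d n j * d n j') with hY2
  have hFXY : F a X Y
      = ∑ m, ∑ n, (s m * t n) * B a (tens (av m) (bv n)) (tens (c m) (d n)) := by
    rw [F_congr a (X' := fun i i' => ∑ m, s m * (av m i * c m i'))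
      (Y' := fun j j' => ∑ n, t n * (bv n j * d n j'))
      (fun i i' => by rw [hXdec i i']; exact Finset.sum_congr rfl fun m _ => by ring)
      (fun j j' => by rw [hYdec j j']; exact Finset.sum_congr rfl fun n _ => by ring)]
    exact F_bidecomp a s t av c bv d
  have hF11 : F a X1 Y1
      = ∑ m, ∑ n, (s m * t n) * Q a (tens (av m) (bv n)) :=
    F_bidecomp a s t av av bv bv
  have hF22 : F a X2 Y2
      = ∑ m, ∑ n, (s m * t n) * Q a (tens (c m) (d n)) :=
    F_bidecomp a s t c c d d
  have step1 : F a X Y ≤ (F a X1 Y1 + F a X2 Y2) / 2 := by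
    rw [hFXY, hF11, hF22]
    rw [le_div_iff₀ (by norm_num : (0:ℝ) < 2)]
    rw [← Finset.sum_add_distrib, Finset.sum_mul]
    refine Finset.sum_le_sum fun m _ => ?_
    rw [← Finset.sum_add_distrib, Finset.sum_mul]
    refine Finset.sum_le_sum fun n _ => ?_
    have h2B := two_B_le hsym hQ (tens (av m) (bv n)) (tens (c m) (d n))
    have hst : 0 ≤ s m * t n := mul_nonneg (hs m) (ht n)
    nlinarith [mul_le_mul_of_nonneg_left h2B hst]
  have hX1psd : Psd X1 := outer_psd_sum s hs av
  have hX2psd : Psd X2 := outer_psd_sum s hs c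
  have hY1psd : Psd Y1 := outer_psd_sum t ht bv
  have hY2psd : Psd Y2 := outer_psd_sum t ht d
  have hnX1 : nsq X1 ≤ nsq X := by
    rw [← hssq]
    refine nsq_outer_le s hs av (fun m l hml => ?_) (fun m => ?_)
    · rw [havorth m l]; simp [hml]
    · rw [havorth m m]; split <;> norm_num
  have hnX2 : nsq X2 ≤ nsq X := by
    rw [← hssq]
    refine nsq_outer_le s hs c (fun m l hml => ?_) (fun m => ?_)
    · rw [hcorth m l]; simp [hml]
    · rw [hcorth m m]; simp
  have hnY1 : nsq Y1 ≤ nsq Y := by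
    rw [← htsq]
    refine nsq_outer_le t ht bv (fun m l hml => ?_) (fun m => ?_)
    · rw [hbvorth m l]; simp [hml]
    · rw [hbvorth m m]; split <;> norm_num
  have hnY2 : nsq Y2 ≤ nsq Y := by
    rw [← htsq]
    refine nsq_outer_le t ht d (fun m l hml => ?_) (fun m => ?_)
    · rw [hdorth m l]; simp [hml]
    · rw [hdorth m m]; simp
  have key : ∀ (X' : Fin p → Fin p → ℝ) (Y' : Fin k → Fin k → ℝ), Psd X' → Psd Y' →
      nsq X' ≤ nsq X → nsq Y' ≤ nsq Y →
      F a X' Y' ≤ σ * Real.sqrt (nsq X) * Real.sqrt (nsq Y) := by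
    intro X' Y' hX' hY' hnX' hnY'
    refine (hb X' Y' hX' hY').trans ?_
    have h1 : Real.sqrt (nsq X') ≤ Real.sqrt (nsq X) := Real.sqrt_le_sqrt hnX'
    have h2 : Real.sqrt (nsq Y') ≤ Real.sqrt (nsq Y) := Real.sqrt_le_sqrt hnY'
    have h3 : Real.sqrt (nsq X') * Real.sqrt (nsq Y') ≤ Real.sqrt (nsq X) * Real.sqrt (nsq Y) :=
      mul_le_mul h1 h2 (Real.sqrt_nonneg _) (Real.sqrt_nonneg _)
    rw [mul_assoc, mul_assoc]
    exact mul_le_mul_of_nonneg_left h3 hσ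
  have h11 := key X1 Y1 hX1psd hY1psd hnX1 hnY1
  have h22 := key X2 Y2 hX2psd hY2psd hnX2 hnY2
  linarith

/-- normalized identity -/
def idn (n : ℕ) : Fin n → Fin n → ℝ := fun i i' => if i = i' then (Real.sqrt n)⁻¹ else 0

lemma idn_psd (n : ℕ) : Psd (idn n) := by
  constructor
  · intro i j; unfold idn; simp [eq_comm]
  · intro v
    have e : ∀ q : Fin n × Fin n, v q.1 * idn n q.1 q.2 * v q.2
        = if q.2 = q.1 then (Real.sqrt n)⁻¹ * (v q.1 * v q.1) else 0 := by
      rintro ⟨i, i'⟩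
      unfold idn
      by_cases h : i = i'
      · subst h; simp; ring
      · simp [h, Ne.symm h]
    rw [Finset.sum_congr rfl fun q _ => e q]
    rw [Fintype.sum_prod_type]
    have e2 : ∀ i : Fin n, (∑ i' : Fin n, if i' = i then (Real.sqrt n)⁻¹ * (v i * v i) else 0)
        = (Real.sqrt n)⁻¹ * (v i * v i) := by
      intro i
      rw [Finset.sum_ite_eq' Finset.univ i (fun _ => (Real.sqrt n)⁻¹ * (v i * v i))]
      simp
    rw [Finset.sum_congr rfl fun i _ => e2 i]
    refine Finset.sum_nonneg fun i _ => ?_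
    exact mul_nonneg (inv_nonneg.mpr (Real.sqrt_nonneg _)) (mul_self_nonneg _)

lemma idn_nsq {n : ℕ} (hn : 0 < n) : nsq (idn n) = 1 := by
  unfold nsq idn
  rw [Fintype.sum_prod_type]
  have e : ∀ i : Fin n, (∑ i' : Fin n, (if i = i' then (Real.sqrt n)⁻¹ else 0)^2)
      = ((Real.sqrt n)⁻¹)^2 := by
    intro i
    have : ∀ i' : Fin n, (if i = i' then (Real.sqrt n)⁻¹ else 0)^2
        = if i' = i then ((Real.sqrt n)⁻¹)^2 else 0 := by
      intro i'
      by_cases h : i = i'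
      · subst h; simp
      · simp [h, Ne.symm h]
    rw [Finset.sum_congr rfl fun i' _ => this i']
    rw [Finset.sum_ite_eq' Finset.univ i (fun _ => ((Real.sqrt n)⁻¹)^2)]
    simp
  rw [Finset.sum_congr rfl fun i _ => e i]
  rw [Finset.sum_const, Finset.card_univ, Fintype.card_fin]
  have hn0 : (0:ℝ) < n := by exact_mod_cast hn
  rw [← Real.sqrt_inv]
  rw [Real.sq_sqrt (by positivity)]
  field_simp
  rw [nsmul_eq_mul]
  field_simp

lemma exists_max (hp : 0 < p) (hk : 0 < k) (a : Fin p × Fin k → Fin p × Fin k → ℝ) :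
    ∃ (X : Fin p → Fin p → ℝ) (Y : Fin k → Fin k → ℝ),
      Psd X ∧ Psd Y ∧ nsq X = 1 ∧ nsq Y = 1 ∧
      ∀ X' Y', Psd X' → Psd Y' → nsq X' = 1 → nsq Y' = 1 → F a X' Y' ≤ F a X Y := by
  classical
  set E := (Fin p → Fin p → ℝ) × (Fin k → Fin k → ℝ)
  set S : Set E := {Z | Psd Z.1 ∧ Psd Z.2 ∧ nsq Z.1 = 1 ∧ nsq Z.2 = 1} with hS
  have ce1 : ∀ (i j : Fin p), Continuous fun Z : E => Z.1 i j := fun i j =>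
    (continuous_apply j).comp ((continuous_apply i).comp continuous_fst)
  have ce2 : ∀ (i j : Fin k), Continuous fun Z : E => Z.2 i j := fun i j =>
    (continuous_apply j).comp ((continuous_apply i).comp continuous_snd)
  have hcont : Continuous fun Z : E => F a Z.1 Z.2 := by
    unfold F
    exact continuous_finset_sum _ fun q _ =>
      ((ce1 q.1.1 q.1.2).mul (ce2 q.2.1 q.2.2)).mul continuous_const
  have hnsq1 : Continuous fun Z : E => nsq Z.1 := by
    unfold nsq
    exact continuous_finset_sum _ fun q _ => (ce1 q.1 q.2).pow 2
  have hnsq2 : Continuous fun Z : E => nsq Z.2 := by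
    unfold nsq
    exact continuous_finset_sum _ fun q _ => (ce2 q.1 q.2).pow 2
  have hclosed : IsClosed S := by
    have h1 : S = (⋂ (i : Fin p) (j : Fin p), {Z : E | Z.1 i j = Z.1 j i})
        ∩ ((⋂ (v : Fin p → ℝ), {Z : E | 0 ≤ ∑ q : Fin p × Fin p, v q.1 * Z.1 q.1 q.2 * v q.2})
        ∩ ((⋂ (i : Fin k) (j : Fin k), {Z : E | Z.2 i j = Z.2 j i})
        ∩ ((⋂ (v : Fin k → ℝ), {Z : E | 0 ≤ ∑ q : Fin k × Fin k, v q.1 * Z.2 q.1 q.2 * v q.2})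
        ∩ ({Z : E | nsq Z.1 = 1} ∩ {Z : E | nsq Z.2 = 1})))) := by
      ext Z
      simp only [hS, Set.mem_setOf_eq, Set.mem_inter_iff, Set.mem_iInter, Psd]
      tauto
    rw [h1]
    refine IsClosed.inter (isClosed_iInter fun i => isClosed_iInter fun j =>
      isClosed_eq (ce1 i j) (ce1 j i)) ?_
    refine IsClosed.inter (isClosed_iInter fun v => isClosed_le continuous_const
      (continuous_finset_sum _ fun q _ => (continuous_const.mul (ce1 q.1 q.2)).mul
        continuous_const)) ?_
    refine IsClosed.inter (isClosed_iInter fun i => isClosed_iInter fun j =>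
      isClosed_eq (ce2 i j) (ce2 j i)) ?_
    refine IsClosed.inter (isClosed_iInter fun v => isClosed_le continuous_const
      (continuous_finset_sum _ fun q _ => (continuous_const.mul (ce2 q.1 q.2)).mul
        continuous_const)) ?_
    exact IsClosed.inter (isClosed_eq hnsq1 continuous_const)
      (isClosed_eq hnsq2 continuous_const)
  have hbdd : Bornology.IsBounded S := by
    rw [Metric.isBounded_iff_subset_closedBall 0]
    refine ⟨1, fun Z hZ => ?_⟩
    rw [Metric.mem_closedBall, dist_zero_right]
    obtain ⟨h1, h2, h3, h4⟩ := hZ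
    rw [Prod.norm_def]
    have hb1 : ‖Z.1‖ ≤ 1 := by
      rw [pi_norm_le_iff_of_nonneg (by norm_num)]
      intro i
      rw [pi_norm_le_iff_of_nonneg (by norm_num)]
      intro j
      rw [Real.norm_eq_abs, abs_le]
      have := entry_sq_le_nsq Z.1 i j
      rw [h3] at this
      constructor <;> nlinarith
    have hb2 : ‖Z.2‖ ≤ 1 := by
      rw [pi_norm_le_iff_of_nonneg (by norm_num)]
      intro i
      rw [pi_norm_le_iff_of_nonneg (by norm_num)]
      intro j
      rw [Real.norm_eq_abs, abs_le]
      have := entry_sq_le_nsq Z.2 i j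
      rw [h4] at this
      constructor <;> nlinarith
    exact max_le hb1 hb2
  have hcompact : IsCompact S := Metric.isCompact_of_isClosed_isBounded hclosed hbdd
  have hne : S.Nonempty := ⟨(idn p, idn k), ⟨idn_psd p, idn_psd k, idn_nsq hp, idn_nsq hk⟩⟩
  obtain ⟨Z, hZS, hmax⟩ := hcompact.exists_isMaxOn hne hcont.continuousOn
  exact ⟨Z.1, Z.2, hZS.1, hZS.2.1, hZS.2.2.1, hZS.2.2.2,
    fun X' Y' h1 h2 h3 h4 => hmax (⟨h1, h2, h3, h4⟩ : (X', Y') ∈ S)⟩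



/-! ### Positive definiteness predicate and partial contractions -/

def Pd {n : ℕ} (X : Fin n → Fin n → ℝ) : Prop :=
  (∀ i j, X i j = X j i) ∧
    ∀ v : Fin n → ℝ, v ≠ 0 → 0 < ∑ q : Fin n × Fin n, v q.1 * X q.1 q.2 * v q.2

lemma Pd.psd {n : ℕ} {X : Fin n → Fin n → ℝ} (h : Pd X) : Psd X := by
  refine ⟨h.1, fun v => ?_⟩
  by_cases hv : v = 0
  · subst hv
    rw [Finset.sum_eq_zero fun q _ => by simp]
  · exact le_of_lt (h.2 v hv)

lemma Pd.smul {n : ℕ} {X : Fin n → Fin n → ℝ} (h : Pd X) {c : ℝ} (hc : 0 < c) :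
    Pd (fun i j => c * X i j) := by
  refine ⟨fun i j => by simp only []; rw [h.1 i j], fun v hv => ?_⟩
  have e : (∑ q : Fin n × Fin n, v q.1 * (c * X q.1 q.2) * v q.2)
      = c * ∑ q : Fin n × Fin n, v q.1 * X q.1 q.2 * v q.2 := by
    rw [Finset.mul_sum]; exact Finset.sum_congr rfl fun q _ => by ring
  rw [e]
  exact mul_pos hc (h.2 v hv)

lemma quad_single {n : ℕ} (X : Fin n → Fin n → ℝ) (i : Fin n) :
    (∑ q : Fin n × Fin n, (Pi.single i 1 : Fin n → ℝ) q.1 * X q.1 q.2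
      * (Pi.single i 1 : Fin n → ℝ) q.2) = X i i := by
  rw [Finset.sum_eq_single_of_mem (i, i) (Finset.mem_univ _)]
  · simp
  · rintro ⟨e1, e2⟩ _ hne
    by_cases h1 : e1 = i
    · have h2 : e2 ≠ i := fun h => hne (by rw [h1, h])
      rw [Pi.single_eq_of_ne h2]
      ring
    · rw [Pi.single_eq_of_ne h1]
      ring

lemma Pd.diag_pos {n : ℕ} {X : Fin n → Fin n → ℝ} (h : Pd X) (i : Fin n) : 0 < X i i := by
  have h1 := h.2 (Pi.single i 1) (by
    intro hc
    have := congr_fun hc i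
    simp at this)
  rw [quad_single X i] at h1
  exact h1

lemma Pd.nsq_pos {n : ℕ} {X : Fin n → Fin n → ℝ} (h : Pd X) (hn : 0 < n) : 0 < nsq X := by
  have i : Fin n := ⟨0, hn⟩
  have h1 := h.diag_pos i
  have h2 := entry_sq_le_nsq X i i
  nlinarith

/-- symmetric eigendecomposition with eigenvalue formula -/
lemma sym_decomp {n : ℕ} (Y : Fin n → Fin n → ℝ) (hsymY : ∀ i j, Y i j = Y j i) :
    ∃ (c : Fin n → Fin n → ℝ) (μ : Fin n → ℝ),
      (∀ m l, (∑ i, c m i * c l i) = if m = l then 1 else 0) ∧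
      (∀ i i', Y i i' = ∑ m, μ m * (c m i * c m i')) ∧
      (∀ m, μ m = ∑ q : Fin n × Fin n, c m q.1 * Y q.1 q.2 * c m q.2) := by
  classical
  set H : Matrix (Fin n) (Fin n) ℝ := Matrix.of Y with hHdef
  have hH : H.IsHermitian := by
    ext i j
    simp only [Matrix.conjTranspose_apply, star_trivial, hHdef, Matrix.of_apply]
    exact hsymY j i
  obtain ⟨c, μ, hco, hcc, heig⟩ := eig H hH
  have heig' : ∀ m i, (∑ i', Y i i' * c m i') = μ m * c m i := heig
  refine ⟨c, μ, hco, ?_, ?_⟩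
  · intro i i'
    have e1 : (∑ m, μ m * (c m i * c m i')) = ∑ m, (∑ t, Y i t * c m t) * c m i' := by
      refine Finset.sum_congr rfl fun m _ => ?_
      rw [heig' m i]; ring
    rw [e1]
    have e2 : (∑ m, (∑ t, Y i t * c m t) * c m i') = ∑ m, ∑ t, Y i t * (c m t * c m i') := by
      refine Finset.sum_congr rfl fun m _ => ?_
      rw [Finset.sum_mul]
      exact Finset.sum_congr rfl fun t _ => by ring
    rw [e2, Finset.sum_comm]
    have e3 : ∀ t, (∑ m, Y i t * (c m t * c m i')) = Y i t * (if t = i' then 1 else 0) := by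
      intro t
      rw [← hcc t i', Finset.mul_sum]
    rw [Finset.sum_congr rfl fun t _ => e3 t]
    simp
  · intro m
    rw [Fintype.sum_prod_type]
    have e4 : ∀ j, (∑ j', c m j * Y j j' * c m j') = c m j * (μ m * c m j) := by
      intro j
      rw [← heig' m j, Finset.mul_sum]
      exact Finset.sum_congr rfl fun j' _ => by ring
    rw [Finset.sum_congr rfl fun j _ => e4 j]
    have e5 : (∑ j, c m j * (μ m * c m j)) = μ m * ∑ j, c m j * c m j := by
      rw [Finset.mul_sum]
      exact Finset.sum_congr rfl fun j _ => by ring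
    rw [e5, hco m m]
    simp

variable {p k : ℕ}

def Phi (a : Fin p × Fin k → Fin p × Fin k → ℝ) (Y : Fin k → Fin k → ℝ) :
    Fin p → Fin p → ℝ :=
  fun i i' => ∑ r : Fin k × Fin k, a (i, r.1) (i', r.2) * Y r.1 r.2

def Psi (a : Fin p × Fin k → Fin p × Fin k → ℝ) (X : Fin p → Fin p → ℝ) :
    Fin k → Fin k → ℝ :=
  fun j j' => ∑ r : Fin p × Fin p, a (r.1, j) (r.2, j') * X r.1 r.2

lemma F_eq_inner_Phi (a : Fin p × Fin k → Fin p × Fin k → ℝ) (X : Fin p → Fin p → ℝ)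
    (Y : Fin k → Fin k → ℝ) :
    F a X Y = ∑ q : Fin p × Fin p, X q.1 q.2 * Phi a Y q.1 q.2 := by
  unfold F Phi
  rw [Fintype.sum_prod_type]
  refine Finset.sum_congr rfl fun q _ => ?_
  rw [Finset.mul_sum]
  exact Finset.sum_congr rfl fun r _ => by ring

lemma F_eq_inner_Psi (a : Fin p × Fin k → Fin p × Fin k → ℝ) (X : Fin p → Fin p → ℝ)
    (Y : Fin k → Fin k → ℝ) :
    F a X Y = ∑ r : Fin k × Fin k, Psi a X r.1 r.2 * Y r.1 r.2 := by
  unfold F Psi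
  rw [Fintype.sum_prod_type, Finset.sum_comm]
  refine Finset.sum_congr rfl fun r _ => ?_
  rw [Finset.sum_mul]
  exact Finset.sum_congr rfl fun q _ => by ring


lemma exists_ne_zero_fun {n : ℕ} {v : Fin n → ℝ} (hv : v ≠ 0) : ∃ i, v i ≠ 0 := by
  by_contra h
  push_neg at h
  exact hv (funext fun i => h i)

lemma tens_ne_zero {u : Fin p → ℝ} {v : Fin k → ℝ} (hu : u ≠ 0) (hv : v ≠ 0) :
    tens u v ≠ 0 := by
  obtain ⟨i0, hi0⟩ := exists_ne_zero_fun hu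
  obtain ⟨j0, hj0⟩ := exists_ne_zero_fun hv
  intro h
  have := congr_fun h (i0, j0)
  exact mul_ne_zero hi0 hj0 this

lemma Phi_pd (a : Fin p × Fin k → Fin p × Fin k → ℝ)
    (hsym : ∀ e f, a e f = a f e)
    (hpd : ∀ z, z ≠ 0 → 0 < Q a z) {Y : Fin k → Fin k → ℝ}
    (hY : Psd Y) (hYne : nsq Y ≠ 0) :
    Pd (Phi a Y) := by
  obtain ⟨c, μ, hco, hYdec, hμ⟩ := sym_decomp Y hY.1
  have hμnn : ∀ m, 0 ≤ μ m := fun m => (hμ m) ▸ hY.2 (c m)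
  constructor
  · intro i i'
    show Phi a Y i i' = Phi a Y i' i
    unfold Phi
    refine Fintype.sum_equiv (Equiv.prodComm _ _) _ _ fun r => ?_
    simp only [Equiv.prodComm_apply, Prod.fst_swap, Prod.snd_swap]
    rw [hsym (i, r.1) (i', r.2), hY.1 r.1 r.2]
  · intro v hv
    have hquad : (∑ q : Fin p × Fin p, v q.1 * Phi a Y q.1 q.2 * v q.2)
        = F a (fun i i' => v i * v i') Y := by
      rw [F_eq_inner_Phi]
      exact Finset.sum_congr rfl fun q _ => by ring
    rw [hquad]
    have hdec : F a (fun i i' => v i * v i') Y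
        = ∑ n, μ n * Q a (tens v (c n)) := by
      rw [F_congr a (X' := fun i i' => v i * v i')
        (Y' := fun j j' => ∑ n, μ n * (c n j * c n j')) (fun _ _ => rfl) hYdec]
      rw [F_sum_right a _ (fun n j j' => μ n * (c n j * c n j'))]
      refine Finset.sum_congr rfl fun n _ => ?_
      rw [F_smul_right a (μ n) _ (fun j j' => c n j * c n j'), F_outer]
      rfl
    rw [hdec]
    have hex : ∃ n0, μ n0 ≠ 0 := by
      by_contra h
      push_neg at h
      apply hYne
      have hY0 : ∀ i j, Y i j = 0 := by
        intro i j
        rw [hYdec i j]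
        exact Finset.sum_eq_zero fun n _ => by rw [h n]; ring
      unfold nsq
      exact Finset.sum_eq_zero fun q _ => by rw [hY0 q.1 q.2]; ring
    obtain ⟨n0, hn0⟩ := hex
    have hcne : c n0 ≠ 0 := by
      intro h
      have := hco n0 n0
      rw [Finset.sum_eq_zero fun i _ => by rw [congr_fun h i]; simp] at this
      simp at this
    refine Finset.sum_pos' (fun n _ => mul_nonneg (hμnn n) ?_) ⟨n0, Finset.mem_univ n0, ?_⟩
    · by_cases hz : tens v (c n) = 0
      · rw [hz]
        unfold Q B
        rw [Finset.sum_eq_zero fun e _ => by simp]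
      · exact le_of_lt (hpd _ hz)
    · exact mul_pos (lt_of_le_of_ne (hμnn n0) (Ne.symm hn0))
        (hpd _ (tens_ne_zero hv hcne))

lemma Psi_pd (a : Fin p × Fin k → Fin p × Fin k → ℝ)
    (hsym : ∀ e f, a e f = a f e)
    (hpd : ∀ z, z ≠ 0 → 0 < Q a z) {X : Fin p → Fin p → ℝ}
    (hX : Psd X) (hXne : nsq X ≠ 0) :
    Pd (Psi a X) := by
  obtain ⟨c, μ, hco, hXdec, hμ⟩ := sym_decomp X hX.1
  have hμnn : ∀ m, 0 ≤ μ m := fun m => (hμ m) ▸ hX.2 (c m)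
  constructor
  · intro j j'
    show Psi a X j j' = Psi a X j' j
    unfold Psi
    refine Fintype.sum_equiv (Equiv.prodComm _ _) _ _ fun r => ?_
    simp only [Equiv.prodComm_apply, Prod.fst_swap, Prod.snd_swap]
    rw [hsym (r.1, j) (r.2, j'), hX.1 r.1 r.2]
  · intro w hw
    have hquad : (∑ r : Fin k × Fin k, w r.1 * Psi a X r.1 r.2 * w r.2)
        = F a X (fun j j' => w j * w j') := by
      rw [F_eq_inner_Psi]
      exact Finset.sum_congr rfl fun r _ => by ring
    rw [hquad]
    have hdec : F a X (fun j j' => w j * w j')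
        = ∑ m, μ m * Q a (tens (c m) w) := by
      rw [F_congr a (X' := fun i i' => ∑ m, μ m * (c m i * c m i'))
        (Y' := fun j j' => w j * w j') hXdec (fun _ _ => rfl)]
      rw [F_sum_left a (fun m i i' => μ m * (c m i * c m i'))]
      refine Finset.sum_congr rfl fun m _ => ?_
      rw [F_smul_left a (μ m) (fun i i' => c m i * c m i'), F_outer]
      rfl
    rw [hdec]
    have hex : ∃ m0, μ m0 ≠ 0 := by
      by_contra h
      push_neg at h
      apply hXne
      have hX0 : ∀ i j, X i j = 0 := by
        intro i j
        rw [hXdec i j]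
        exact Finset.sum_eq_zero fun m _ => by rw [h m]; ring
      unfold nsq
      exact Finset.sum_eq_zero fun q _ => by rw [hX0 q.1 q.2]; ring
    obtain ⟨m0, hm0⟩ := hex
    have hcne : c m0 ≠ 0 := by
      intro h
      have := hco m0 m0
      rw [Finset.sum_eq_zero fun i _ => by rw [congr_fun h i]; simp] at this
      simp at this
    refine Finset.sum_pos' (fun m _ => mul_nonneg (hμnn m) ?_) ⟨m0, Finset.mem_univ m0, ?_⟩
    · by_cases hz : tens (c m) w = 0
      · rw [hz]
        unfold Q B
        rw [Finset.sum_eq_zero fun e _ => by simp]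
      · exact le_of_lt (hpd _ hz)
    · exact mul_pos (lt_of_le_of_ne (hμnn m0) (Ne.symm hm0))
        (hpd _ (tens_ne_zero hcne hw))


lemma psd_bound (a : Fin p × Fin k → Fin p × Fin k → ℝ) {σ : ℝ} (hσ : 0 ≤ σ)
    (hmax : ∀ X' Y', Psd X' → Psd Y' → nsq X' = 1 → nsq Y' = 1 → F a X' Y' ≤ σ)
    {X : Fin p → Fin p → ℝ} {Y : Fin k → Fin k → ℝ} (hX : Psd X) (hY : Psd Y) :
    F a X Y ≤ σ * Real.sqrt (nsq X) * Real.sqrt (nsq Y) := by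
  by_cases h1 : nsq X = 0
  · have hF : F a X Y = 0 := Finset.sum_eq_zero fun q _ => by
      rw [eq_zero_of_nsq_eq_zero h1 q.1.1 q.1.2]; ring
    rw [hF, h1]
    simp
  by_cases h2 : nsq Y = 0
  · have hF : F a X Y = 0 := Finset.sum_eq_zero fun q _ => by
      rw [eq_zero_of_nsq_eq_zero h2 q.2.1 q.2.2]; ring
    rw [hF, h2]
    simp [mul_nonneg (mul_nonneg hσ (Real.sqrt_nonneg _)) (Real.sqrt_nonneg _)]
  have hx : 0 < nsq X := lt_of_le_of_ne (nsq_nonneg X) (Ne.symm h1)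
  have hy : 0 < nsq Y := lt_of_le_of_ne (nsq_nonneg Y) (Ne.symm h2)
  set rX := Real.sqrt (nsq X) with hrX
  set rY := Real.sqrt (nsq Y) with hrY
  have hrx : 0 < rX := Real.sqrt_pos.mpr hx
  have hry : 0 < rY := Real.sqrt_pos.mpr hy
  have hrx2 : rX^2 = nsq X := Real.sq_sqrt hx.le
  have hry2 : rY^2 = nsq Y := Real.sq_sqrt hy.le
  have hX' : Psd (fun i i' => rX⁻¹ * X i i') := hX.smul (inv_nonneg.mpr hrx.le)
  have hY' : Psd (fun j j' => rY⁻¹ * Y j j') := hY.smul (inv_nonneg.mpr hry.le)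
  have hnX' : nsq (fun i i' => rX⁻¹ * X i i') = 1 := by
    rw [nsq_smul, ← hrx2]
    field_simp
  have hnY' : nsq (fun j j' => rY⁻¹ * Y j j') = 1 := by
    rw [nsq_smul, ← hry2]
    field_simp
  have hF' := hmax _ _ hX' hY' hnX' hnY'
  rw [F_smul_left, F_smul_right] at hF'
  have := mul_le_mul_of_nonneg_left hF' (le_of_lt (mul_pos hrx hry))
  calc F a X Y = (rX * rY) * (rX⁻¹ * (rY⁻¹ * F a X Y)) := by
        field_simp
    _ ≤ (rX * rY) * σ := this
    _ = σ * rX * rY := by ring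

lemma upgrade (a : Fin p × Fin k → Fin p × Fin k → ℝ)
    (hsym : ∀ e f, a e f = a f e)
    (hpd : ∀ z, z ≠ 0 → 0 < Q a z) (hp : 0 < p) (hk : 0 < k)
    {X0 : Fin p → Fin p → ℝ} {Y0 : Fin k → Fin k → ℝ}
    (hX0 : Psd X0) (hY0 : Psd Y0) (hnX0 : nsq X0 = 1) (hnY0 : nsq Y0 = 1)
    (hmax : ∀ X' Y', Psd X' → Psd Y' → nsq X' = 1 → nsq Y' = 1 → F a X' Y' ≤ F a X0 Y0) :
    ∃ (X1 : Fin p → Fin p → ℝ) (Y1 : Fin k → Fin k → ℝ),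
      Pd X1 ∧ Pd Y1 ∧ nsq X1 = 1 ∧ nsq Y1 = 1 ∧ F a X1 Y1 = F a X0 Y0 := by
  set σ := F a X0 Y0 with hσdef
  -- Step 1 : replace X0 by the normalized contraction of Y0
  have hPhiPd : Pd (Phi a Y0) := Phi_pd a hsym hpd hY0 (by rw [hnY0]; norm_num)
  have hn1 : 0 < nsq (Phi a Y0) := hPhiPd.nsq_pos hp
  set sq1 := Real.sqrt (nsq (Phi a Y0)) with hsq1def
  have hsq1 : 0 < sq1 := Real.sqrt_pos.mpr hn1
  set X1 : Fin p → Fin p → ℝ := fun i i' => sq1⁻¹ * Phi a Y0 i i' with hX1def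
  have hX1pd : Pd X1 := hPhiPd.smul (inv_pos.mpr hsq1)
  have hnX1 : nsq X1 = 1 := by
    rw [hX1def, nsq_smul, ← Real.sq_sqrt hn1.le, ← hsq1def]
    field_simp
  have hFPhi : F a (Phi a Y0) Y0 = nsq (Phi a Y0) := by
    rw [F_eq_inner_Phi]
    exact Finset.sum_congr rfl fun q _ => (pow_two _).symm
  have hFX1Y0 : F a X1 Y0 = sq1 := by
    rw [hX1def, F_smul_left, hFPhi, ← Real.mul_self_sqrt hn1.le, ← hsq1def]
    field_simp
  have hle1 : sq1 ≤ σ := by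
    rw [← hFX1Y0]
    exact hmax X1 Y0 hX1pd.psd hY0 hnX1 hnY0
  have hge1 : σ ≤ sq1 := by
    have hCS := Finset.sum_mul_sq_le_sq_mul_sq Finset.univ
      (fun q : Fin p × Fin p => X0 q.1 q.2) (fun q => Phi a Y0 q.1 q.2)
    have hσeq : σ = ∑ q : Fin p × Fin p, X0 q.1 q.2 * Phi a Y0 q.1 q.2 :=
      F_eq_inner_Phi a X0 Y0
    have h1 : σ^2 ≤ nsq (Phi a Y0) := by
      rw [hσeq]
      calc (∑ q : Fin p × Fin p, X0 q.1 q.2 * Phi a Y0 q.1 q.2)^2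
          ≤ (∑ q : Fin p × Fin p, (X0 q.1 q.2)^2) * ∑ q : Fin p × Fin p, (Phi a Y0 q.1 q.2)^2 :=
            hCS
        _ = nsq (Phi a Y0) := by
            rw [show (∑ q : Fin p × Fin p, (X0 q.1 q.2)^2) = nsq X0 from rfl, hnX0, one_mul]
            rfl
    calc σ ≤ |σ| := le_abs_self σ
      _ = Real.sqrt (σ^2) := (Real.sqrt_sq_eq_abs σ).symm
      _ ≤ sq1 := Real.sqrt_le_sqrt h1
  have hσX1Y0 : F a X1 Y0 = σ := by rw [hFX1Y0]; linarith
  -- Step 2 : replace Y0 by the normalized contraction of X1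
  have hPsiPd : Pd (Psi a X1) := Psi_pd a hsym hpd hX1pd.psd (by rw [hnX1]; norm_num)
  have hn2 : 0 < nsq (Psi a X1) := hPsiPd.nsq_pos hk
  set sq2 := Real.sqrt (nsq (Psi a X1)) with hsq2def
  have hsq2 : 0 < sq2 := Real.sqrt_pos.mpr hn2
  set Y1 : Fin k → Fin k → ℝ := fun j j' => sq2⁻¹ * Psi a X1 j j' with hY1def
  have hY1pd : Pd Y1 := hPsiPd.smul (inv_pos.mpr hsq2)
  have hnY1 : nsq Y1 = 1 := by
    rw [hY1def, nsq_smul, ← Real.sq_sqrt hn2.le, ← hsq2def]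
    field_simp
  have hFPsi : F a X1 (Psi a X1) = nsq (Psi a X1) := by
    rw [F_eq_inner_Psi]
    exact Finset.sum_congr rfl fun r _ => (pow_two _).symm
  have hFX1Y1 : F a X1 Y1 = sq2 := by
    rw [hY1def, F_smul_right, hFPsi, ← Real.mul_self_sqrt hn2.le, ← hsq2def]
    field_simp
  have hle2 : sq2 ≤ σ := by
    rw [← hFX1Y1]
    exact hmax X1 Y1 hX1pd.psd hY1pd.psd hnX1 hnY1
  have hge2 : σ ≤ sq2 := by
    have hCS := Finset.sum_mul_sq_le_sq_mul_sq Finset.univ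
      (fun r : Fin k × Fin k => Psi a X1 r.1 r.2) (fun r => Y0 r.1 r.2)
    have hσeq : σ = ∑ r : Fin k × Fin k, Psi a X1 r.1 r.2 * Y0 r.1 r.2 := by
      rw [← hσX1Y0]
      exact F_eq_inner_Psi a X1 Y0
    have h1 : σ^2 ≤ nsq (Psi a X1) := by
      rw [hσeq]
      calc (∑ r : Fin k × Fin k, Psi a X1 r.1 r.2 * Y0 r.1 r.2)^2
          ≤ (∑ r : Fin k × Fin k, (Psi a X1 r.1 r.2)^2) * ∑ r : Fin k × Fin k, (Y0 r.1 r.2)^2 :=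
            hCS
        _ = nsq (Psi a X1) := by
            rw [show (∑ r : Fin k × Fin k, (Y0 r.1 r.2)^2) = nsq Y0 from rfl, hnY0, mul_one]
            rfl
    calc σ ≤ |σ| := le_abs_self σ
      _ = Real.sqrt (σ^2) := (Real.sqrt_sq_eq_abs σ).symm
      _ ≤ sq2 := Real.sqrt_le_sqrt h1
  exact ⟨X1, Y1, hX1pd, hY1pd, hnX1, hnY1, by rw [hFX1Y1]; linarith⟩


lemma quad_single_gen {ι : Type*} [Fintype ι] [DecidableEq ι] (X : ι → ι → ℝ) (i : ι) :
    (∑ q : ι × ι, (Pi.single i 1 : ι → ℝ) q.1 * X q.1 q.2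
      * (Pi.single i 1 : ι → ℝ) q.2) = X i i := by
  rw [Finset.sum_eq_single_of_mem (i, i) (Finset.mem_univ _)]
  · simp
  · rintro ⟨e1, e2⟩ _ hne
    by_cases h1 : e1 = i
    · have h2 : e2 ≠ i := fun h => hne (by rw [h1, h])
      rw [Pi.single_eq_of_ne h2]
      ring
    · rw [Pi.single_eq_of_ne h1]
      ring

lemma single_ne_zero_fun {ι : Type*} [Fintype ι] [DecidableEq ι] (i : ι) :
    (Pi.single i 1 : ι → ℝ) ≠ 0 := by
  intro h
  have := congr_fun h i
  simp at this

lemma a_diag_pos {a : Fin p × Fin k → Fin p × Fin k → ℝ}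
    (hpd : ∀ z, z ≠ 0 → 0 < Q a z) (e : Fin p × Fin k) : 0 < a e e := by
  have h := hpd (Pi.single e 1) (single_ne_zero_fun e)
  unfold Q B at h
  rwa [quad_single_gen a e] at h

lemma F_idn_pos (a : Fin p × Fin k → Fin p × Fin k → ℝ)
    (hpd : ∀ z, z ≠ 0 → 0 < Q a z) (hp : 0 < p) (hk : 0 < k) :
    0 < F a (idn p) (idn k) := by
  have hcp : (0:ℝ) < (Real.sqrt p)⁻¹ := by
    rw [inv_pos]
    exact Real.sqrt_pos.mpr (by exact_mod_cast hp)
  have hck : (0:ℝ) < (Real.sqrt k)⁻¹ := by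
    rw [inv_pos]
    exact Real.sqrt_pos.mpr (by exact_mod_cast hk)
  unfold F
  refine Finset.sum_pos' (fun q _ => ?_) ⟨((⟨0, hp⟩, ⟨0, hp⟩), (⟨0, hk⟩, ⟨0, hk⟩)),
    Finset.mem_univ _, ?_⟩
  · unfold idn
    by_cases h1 : q.1.1 = q.1.2
    · by_cases h2 : q.2.1 = q.2.2
      · rw [if_pos h1, if_pos h2]
        have hdiag := a_diag_pos hpd (q.1.1, q.2.1)
        rw [← h1, ← h2] at *
        positivity
      · rw [if_neg h2]
        simp
    · rw [if_neg h1]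
      simp
  · unfold idn
    simp only [if_pos rfl]
    have hdiag := a_diag_pos hpd ((⟨0, hp⟩ : Fin p), (⟨0, hk⟩ : Fin k))
    positivity

lemma dot_quad {ι : Type*} [Fintype ι] (M : ι → ι → ℝ) (v : ι → ℝ) :
    dotProduct v (Matrix.of M *ᵥ v) = ∑ r : ι × ι, v r.1 * M r.1 r.2 * v r.2 := by
  rw [Fintype.sum_prod_type]
  unfold dotProduct Matrix.mulVec
  refine Finset.sum_congr rfl fun i _ => ?_
  unfold dotProduct
  rw [Finset.mul_sum]
  exact Finset.sum_congr rfl fun j _ => by simp [Matrix.of_apply]; ring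


lemma one_posDef {n : ℕ} : (1 : Matrix (Fin n) (Fin n) ℝ).PosDef := by
  rw [Matrix.posDef_iff_dotProduct_mulVec]
  constructor
  · exact Matrix.isHermitian_one
  · intro x hx
    rw [Matrix.one_mulVec, star_trivial]
    obtain ⟨i, hi⟩ := exists_ne_zero_fun hx
    unfold dotProduct
    exact Finset.sum_pos' (fun j _ => mul_self_nonneg _)
      ⟨i, Finset.mem_univ i, mul_self_pos.mpr hi⟩

end VLP

set_option maxHeartbeats 2000000 in
open VLP in
/-- van Loan–Pitsianis: if `A ∈ ℝ^{kp×kp}` is symmetric positive definite,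
then the Frobenius distance from `A` to the set of Kronecker products is minimized at a
pair of symmetric positive definite factors. -/
theorem exists_posDef_kronecker_minimizers {p k : ℕ}
    (A : Matrix (Fin p × Fin k) (Fin p × Fin k) ℝ) (hA : A.PosDef) :
    ∃ (G1 : Matrix (Fin p) (Fin p) ℝ) (G2 : Matrix (Fin k) (Fin k) ℝ),
      G1.PosDef ∧ G2.PosDef ∧
      ∀ (B1 : Matrix (Fin p) (Fin p) ℝ) (B2 : Matrix (Fin k) (Fin k) ℝ),
        frobNorm (A - G1 ⊗ₖ G2) ≤ frobNorm (A - B1 ⊗ₖ B2) := by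
  classical
  by_cases hp0 : p = 0
  · subst hp0
    refine ⟨1, 1, one_posDef, one_posDef, fun B1 B2 => ?_⟩
    have hz : ∀ M : Matrix (Fin 0 × Fin k) (Fin 0 × Fin k) ℝ, frobNorm M = 0 := by
      intro M
      unfold frobNorm
      rw [Matrix.trace]
      simp
    rw [hz, hz]
  by_cases hk0 : k = 0
  · subst hk0
    refine ⟨1, 1, one_posDef, one_posDef, fun B1 B2 => ?_⟩
    have hz : ∀ M : Matrix (Fin p × Fin 0) (Fin p × Fin 0) ℝ, frobNorm M = 0 := by
      intro M
      unfold frobNorm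
      rw [Matrix.trace]
      simp
    rw [hz, hz]
  have hp : 0 < p := Nat.pos_of_ne_zero hp0
  have hk : 0 < k := Nat.pos_of_ne_zero hk0
  set a : Fin p × Fin k → Fin p × Fin k → ℝ := fun e f => A e f with ha
  have hsym : ∀ e f, a e f = a f e := by
    intro e f
    have h := congr_fun (congr_fun hA.1 e) f
    rw [Matrix.conjTranspose_apply, star_trivial] at h
    exact h.symm
  have hQof : ∀ z, Q a z = dotProduct z (A *ᵥ z) := by
    intro z
    show (∑ e : (Fin p × Fin k) × (Fin p × Fin k), z e.1 * a e.1 e.2 * z e.2) = _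
    exact (dot_quad a z).symm
  have hpd : ∀ z, z ≠ 0 → 0 < Q a z := by
    intro z hz
    rw [hQof z]
    have h := hA.dotProduct_mulVec_pos hz
    rwa [star_trivial] at h
  have hQnn : ∀ z, 0 ≤ Q a z := by
    intro z
    by_cases hz : z = 0
    · subst hz
      have : Q a 0 = 0 := by
        show (∑ e : (Fin p × Fin k) × (Fin p × Fin k),
          (0 : Fin p × Fin k → ℝ) e.1 * a e.1 e.2 * (0 : Fin p × Fin k → ℝ) e.2) = 0
        exact Finset.sum_eq_zero fun e _ => by simp
      rw [this]
    · exact le_of_lt (hpd z hz)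
  obtain ⟨X0, Y0, hX0, hY0, hnX0, hnY0, hmax⟩ := exists_max hp hk a
  obtain ⟨X1, Y1, hX1pd, hY1pd, hnX1, hnY1, hF11⟩ :=
    upgrade a hsym hpd hp hk hX0 hY0 hnX0 hnY0 hmax
  set σ := F a X0 Y0 with hσdef
  have hσpos : 0 < σ := lt_of_lt_of_le (F_idn_pos a hpd hp hk)
    (hmax (idn p) (idn k) (idn_psd p) (idn_psd k) (idn_nsq hp) (idn_nsq hk))
  set G1f : Fin p → Fin p → ℝ := fun i i' => σ * X1 i i' with hG1f
  refine ⟨Matrix.of G1f, Matrix.of Y1, ?_, ?_, ?_⟩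
  · rw [Matrix.posDef_iff_dotProduct_mulVec]
    constructor
    · ext i j
      rw [Matrix.conjTranspose_apply, star_trivial]
      show G1f j i = G1f i j
      rw [hG1f]
      simp only []
      rw [hX1pd.1 j i]
    · intro x hx
      rw [star_trivial]
      rw [dot_quad G1f x]
      have e : (∑ r : Fin p × Fin p, x r.1 * G1f r.1 r.2 * x r.2)
          = σ * ∑ r : Fin p × Fin p, x r.1 * X1 r.1 r.2 * x r.2 := by
        rw [Finset.mul_sum]
        exact Finset.sum_congr rfl fun r _ => by rw [hG1f]; ring
      rw [e]
      exact mul_pos hσpos (hX1pd.2 x hx)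
  · rw [Matrix.posDef_iff_dotProduct_mulVec]
    constructor
    · ext i j
      rw [Matrix.conjTranspose_apply, star_trivial]
      show Y1 j i = Y1 i j
      rw [hY1pd.1 j i]
    · intro x hx
      rw [star_trivial]
      rw [dot_quad Y1 x]
      exact hY1pd.2 x hx
  · intro B1 B2
    have hfrob : ∀ M : Matrix (Fin p × Fin k) (Fin p × Fin k) ℝ,
        frobNorm M = Real.sqrt (∑ r : (Fin p × Fin k) × (Fin p × Fin k), (M r.1 r.2)^2) := by
      intro M
      unfold frobNorm
      congr 1
      rw [Matrix.trace]
      unfold Matrix.diag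
      simp only [Matrix.mul_apply, Matrix.transpose_apply]
      calc (∑ x : Fin p × Fin k, ∑ x1 : Fin p × Fin k, M x1 x * M x1 x)
          = ∑ x : Fin p × Fin k, ∑ x1 : Fin p × Fin k, (M x1 x)^2 :=
            Finset.sum_congr rfl fun x _ => Finset.sum_congr rfl fun x1 _ => (pow_two _).symm
        _ = ∑ x1 : Fin p × Fin k, ∑ x : Fin p × Fin k, (M x1 x)^2 := Finset.sum_comm
        _ = ∑ r : (Fin p × Fin k) × (Fin p × Fin k), (M r.1 r.2)^2 := by
            conv_rhs => rw [Fintype.sum_prod_type]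
    have hexp : ∀ (C1 : Matrix (Fin p) (Fin p) ℝ) (C2 : Matrix (Fin k) (Fin k) ℝ),
        (∑ r : (Fin p × Fin k) × (Fin p × Fin k), ((A - C1 ⊗ₖ C2) r.1 r.2)^2)
          = (∑ r : (Fin p × Fin k) × (Fin p × Fin k), (A r.1 r.2)^2)
            - 2 * F a (fun i i' => C1 i i') (fun j j' => C2 j j')
            + nsq (fun i i' => C1 i i') * nsq (fun j j' => C2 j j') := by
      intro C1 C2
      have e1 : ∀ r : (Fin p × Fin k) × (Fin p × Fin k),
          ((A - C1 ⊗ₖ C2) r.1 r.2)^2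
            = (A r.1 r.2)^2
              - 2 * (C1 r.1.1 r.2.1 * C2 r.1.2 r.2.2 * a r.1 r.2)
              + (C1 r.1.1 r.2.1)^2 * (C2 r.1.2 r.2.2)^2 := by
        intro r
        have e0 : (A - C1 ⊗ₖ C2) r.1 r.2 = A r.1 r.2 - C1 r.1.1 r.2.1 * C2 r.1.2 r.2.2 := by
          simp [Matrix.sub_apply, Matrix.kroneckerMap_apply]
        rw [e0]
        have e0' : a r.1 r.2 = A r.1 r.2 := rfl
        rw [e0']
        ring
      rw [Finset.sum_congr rfl fun r _ => e1 r]
      rw [Finset.sum_add_distrib, Finset.sum_sub_distrib]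
      congr 1
      · congr 1
        rw [← Finset.mul_sum]
        congr 1
        exact (Fintype.sum_equiv reix _ _ fun q => by
          simp only [reix, Equiv.coe_fn_mk]; try ring).symm
      · unfold nsq
        rw [← sum_factor (fun q1 : Fin p × Fin p => (C1 q1.1 q1.2)^2)
          (fun q2 : Fin k × Fin k => (C2 q2.1 q2.2)^2)]
        exact Fintype.sum_equiv reix.symm _ _ fun r => by
          simp only [reix, Equiv.coe_fn_symm_mk]; try ring
    rw [hfrob, hfrob]
    apply Real.sqrt_le_sqrt
    rw [hexp (Matrix.of G1f) (Matrix.of Y1), hexp B1 B2]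
    have hFG : F a (fun i i' => (Matrix.of G1f) i i') (fun j j' => (Matrix.of Y1) j j')
        = σ * σ := by
      have e2 : F a (fun i i' => (Matrix.of G1f) i i') (fun j j' => (Matrix.of Y1) j j')
          = F a (fun i i' => σ * X1 i i') Y1 :=
        F_congr a (fun i i' => rfl) (fun j j' => rfl)
      rw [e2, F_smul_left, hF11]
    have hnG1 : nsq (fun i i' => (Matrix.of G1f) i i') = σ^2 := by
      have e3 : nsq (fun i i' => (Matrix.of G1f) i i') = nsq (fun i i' => σ * X1 i i') := rfl
      rw [e3, nsq_smul, hnX1, mul_one]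
    have hnG2 : nsq (fun j j' => (Matrix.of Y1) j j') = 1 := by
      have e4 : nsq (fun j j' => (Matrix.of Y1) j j') = nsq Y1 := rfl
      rw [e4, hnY1]
    rw [hFG, hnG1, hnG2]
    have hFB := gen_bound a hsym hQnn σ hσpos.le
      (fun X Y hX hY => psd_bound a hσpos.le hmax hX hY)
      (fun i i' => B1 i i') (fun j j' => B2 j j')
    set r1 := Real.sqrt (nsq (fun i i' => B1 i i')) with hr1
    set r2 := Real.sqrt (nsq (fun j j' => B2 j j')) with hr2
    have hr1sq : r1^2 = nsq (fun i i' => B1 i i') := Real.sq_sqrt (nsq_nonneg _)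
    have hr2sq : r2^2 = nsq (fun j j' => B2 j j') := Real.sq_sqrt (nsq_nonneg _)
    rw [← hr1sq, ← hr2sq]
    nlinarith [sq_nonneg (σ - r1 * r2), hFB, Real.sqrt_nonneg (nsq (fun i i' => B1 i i')),
      Real.sqrt_nonneg (nsq (fun j j' => B2 j j'))]

end
end

section
/- Let G1 ∈ ℝ^{p×p} and G2 ∈ ℝ^{k×k} be symmetric matrices whose Kronecker product G1 ⊗ G2 is positive definite (with p, k ≥ 1). Then either G1 and G2 are both positive definite, or −G1 and −G2 are both positive definite. In particular (G1)_{11} ≠ 0, the matrices G1/(G1)_{11} and (G1)_{11}·G2 are both symmetric positive definite, the upper-left entry of G1/(G1)_{11} equals 1, and G1 ⊗ G2 = (G1/(G1)_{11}) ⊗ ((G1)_{11}·G2). -/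
open Matrix
open scoped Kronecker

noncomputable section


lemma kron_quad {p k : ℕ} (G1 : Matrix (Fin p) (Fin p) ℝ) (G2 : Matrix (Fin k) (Fin k) ℝ)
    (x : Fin p → ℝ) (y : Fin k → ℝ) :
    dotProduct (fun ij : Fin p × Fin k => x ij.1 * y ij.2)
      ((G1 ⊗ₖ G2) *ᵥ fun ij => x ij.1 * y ij.2)
      = (dotProduct x (G1 *ᵥ x)) * (dotProduct y (G2 *ᵥ y)) := by
  rw [show dotProduct x (G1 *ᵥ x) = ∑ i, ∑ i', x i * (G1 i i' * x i') by
        simp [dotProduct, mulVec, Finset.mul_sum],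
      show dotProduct y (G2 *ᵥ y) = ∑ j, ∑ j', y j * (G2 j j' * y j') by
        simp [dotProduct, mulVec, Finset.mul_sum],
      Fintype.sum_mul_sum]
  simp only [dotProduct, mulVec, kroneckerMap_apply, Fintype.sum_prod_type,
    Finset.mul_sum, Finset.sum_mul]
  apply Finset.sum_congr rfl; intro i _
  apply Finset.sum_congr rfl; intro j _
  rw [Finset.sum_comm]
  apply Finset.sum_congr rfl; intro i' _
  apply Finset.sum_congr rfl; intro j' _
  ring

lemma smul_posDef' {n : ℕ} {M : Matrix (Fin n) (Fin n) ℝ} (hM : M.PosDef) {c : ℝ} (hc : 0 < c) :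
    (c • M).PosDef := by
  refine Matrix.PosDef.of_dotProduct_mulVec_pos ?_ (fun x hx => ?_)
  · unfold Matrix.IsHermitian
    rw [conjTranspose_smul, hM.1]
    simp
  · rw [smul_mulVec, dotProduct_smul, smul_eq_mul]
    exact mul_pos hc (hM.dotProduct_mulVec_pos hx)

lemma quad_single {n : ℕ} (M : Matrix (Fin n) (Fin n) ℝ) (i : Fin n) :
    dotProduct (star (Pi.single i (1:ℝ))) (M *ᵥ Pi.single i 1) = M i i := by
  simp [mulVec_single, single_dotProduct]


/-- if `G1, G2` are symmetric and `G1 ⊗ G2` is positive definite, then either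
both `G1, G2` are positive definite or both `−G1, −G2` are; in particular `(G1)₁₁ ≠ 0`,
the matrices `G1/(G1)₁₁` and `(G1)₁₁·G2` are symmetric positive definite, the upper-left
entry of `G1/(G1)₁₁` is `1`, and `G1 ⊗ G2 = (G1/(G1)₁₁) ⊗ ((G1)₁₁·G2)`. -/
theorem kronecker_posDef_factors {p k : ℕ} (hp : 0 < p) (hk : 0 < k)
    (G1 : Matrix (Fin p) (Fin p) ℝ) (G2 : Matrix (Fin k) (Fin k) ℝ)
    (hG1 : G1.IsSymm) (hG2 : G2.IsSymm) (hPD : (G1 ⊗ₖ G2).PosDef) :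
    ((G1.PosDef ∧ G2.PosDef) ∨ ((-G1).PosDef ∧ (-G2).PosDef)) ∧
    G1 ⟨0, hp⟩ ⟨0, hp⟩ ≠ 0 ∧
    ((G1 ⟨0, hp⟩ ⟨0, hp⟩)⁻¹ • G1).PosDef ∧
    ((G1 ⟨0, hp⟩ ⟨0, hp⟩) • G2).PosDef ∧
    ((G1 ⟨0, hp⟩ ⟨0, hp⟩)⁻¹ • G1) ⟨0, hp⟩ ⟨0, hp⟩ = 1 ∧
    G1 ⊗ₖ G2 = ((G1 ⟨0, hp⟩ ⟨0, hp⟩)⁻¹ • G1) ⊗ₖ ((G1 ⟨0, hp⟩ ⟨0, hp⟩) • G2) := by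
  have hermG1 : G1.IsHermitian := by
    rw [Matrix.IsHermitian, conjTranspose_eq_transpose_of_trivial]; exact hG1
  have hermG2 : G2.IsHermitian := by
    rw [Matrix.IsHermitian, conjTranspose_eq_transpose_of_trivial]; exact hG2
  -- the product of quadratic forms is positive
  have key : ∀ x : Fin p → ℝ, x ≠ 0 → ∀ y : Fin k → ℝ, y ≠ 0 →
      0 < (dotProduct x (G1 *ᵥ x)) * (dotProduct y (G2 *ᵥ y)) := by
    intro x hx y hy
    obtain ⟨i, hi⟩ := Function.ne_iff.mp hx
    obtain ⟨j, hj⟩ := Function.ne_iff.mp hy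
    have hv : (fun ij : Fin p × Fin k => x ij.1 * y ij.2) ≠ 0 := by
      intro h
      have := congrFun h (i, j)
      simp only [Pi.zero_apply] at this hi hj
      exact (mul_ne_zero hi hj) this
    have := hPD.dotProduct_mulVec_pos hv
    rwa [show star (fun ij : Fin p × Fin k => x ij.1 * y ij.2)
        = fun ij : Fin p × Fin k => x ij.1 * y ij.2 from star_trivial _,
      kron_quad] at this
  set e0p : Fin p := ⟨0, hp⟩
  set e0k : Fin k := ⟨0, hk⟩
  have hx0 : (Pi.single e0p 1 : Fin p → ℝ) ≠ 0 := by
    intro h; have := congrFun h e0p; simp at this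
  have hy0 : (Pi.single e0k 1 : Fin k → ℝ) ≠ 0 := by
    intro h; have := congrFun h e0k; simp at this
  set c : ℝ := dotProduct (Pi.single e0k (1:ℝ)) (G2 *ᵥ Pi.single e0k 1) with hc
  have hcq : ∀ x : Fin p → ℝ, x ≠ 0 → 0 < (dotProduct x (G1 *ᵥ x)) * c :=
    fun x hx => key x hx _ hy0
  have hcne : c ≠ 0 := by
    intro h
    have := hcq _ hx0
    rw [h, mul_zero] at this
    exact lt_irrefl 0 this
  have main : (G1.PosDef ∧ G2.PosDef) ∨ ((-G1).PosDef ∧ (-G2).PosDef) := by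
    rcases hcne.lt_or_gt with hneg | hpos
    · right
      have hG1n : (-G1).PosDef := by
        refine Matrix.PosDef.of_dotProduct_mulVec_pos (by rw [Matrix.IsHermitian, conjTranspose_neg, hermG1]) (fun x hx => ?_)
        rw [star_trivial, neg_mulVec, dotProduct_neg]
        have := hcq x hx
        nlinarith
      refine ⟨hG1n, ?_⟩
      have hq1 : dotProduct (Pi.single e0p (1:ℝ)) (G1 *ᵥ Pi.single e0p 1) < 0 := by
        have := hG1n.dotProduct_mulVec_pos hx0
        rw [star_trivial, neg_mulVec, dotProduct_neg] at this
        linarith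
      refine Matrix.PosDef.of_dotProduct_mulVec_pos (by rw [Matrix.IsHermitian, conjTranspose_neg, hermG2]) (fun y hy => ?_)
      rw [star_trivial, neg_mulVec, dotProduct_neg]
      have := key _ hx0 y hy
      nlinarith
    · left
      have hG1p : G1.PosDef := by
        refine Matrix.PosDef.of_dotProduct_mulVec_pos hermG1 (fun x hx => ?_)
        rw [star_trivial]
        have := hcq x hx
        nlinarith
      refine ⟨hG1p, ?_⟩
      have hq1 : 0 < dotProduct (Pi.single e0p (1:ℝ)) (G1 *ᵥ Pi.single e0p 1) := by
        have := hG1p.dotProduct_mulVec_pos hx0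
        rwa [star_trivial] at this
      refine Matrix.PosDef.of_dotProduct_mulVec_pos hermG2 (fun y hy => ?_)
      rw [star_trivial]
      have := key _ hx0 y hy
      nlinarith
  set a : ℝ := G1 e0p e0p with ha
  have haq : dotProduct (star (Pi.single e0p (1:ℝ))) (G1 *ᵥ Pi.single e0p 1) = a :=
    quad_single G1 e0p
  have hane : a ≠ 0 := by
    rcases main with ⟨h1, _⟩ | ⟨h1, _⟩
    · have := h1.dotProduct_mulVec_pos hx0; rw [haq] at this; exact ne_of_gt this
    · have := h1.dotProduct_mulVec_pos hx0
      rw [neg_mulVec, dotProduct_neg, haq] at this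
      exact ne_of_lt (by linarith)
  have hG1s : ((a:ℝ)⁻¹ • G1).PosDef ∧ (a • G2).PosDef := by
    rcases main with ⟨h1, h2⟩ | ⟨h1, h2⟩
    · have hapos : 0 < a := by have := h1.dotProduct_mulVec_pos hx0; rwa [haq] at this
      exact ⟨smul_posDef' h1 (inv_pos.mpr hapos), smul_posDef' h2 hapos⟩
    · have haneg : a < 0 := by
        have := h1.dotProduct_mulVec_pos hx0
        rw [neg_mulVec, dotProduct_neg, haq] at this
        linarith
      constructor
      · have : ((-a)⁻¹ • (-G1)).PosDef := smul_posDef' h1 (inv_pos.mpr (by linarith))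
        rwa [inv_neg, neg_smul, smul_neg, neg_neg] at this
      · have : ((-a) • (-G2)).PosDef := smul_posDef' h2 (by linarith)
        rwa [neg_smul, smul_neg, neg_neg] at this
  refine ⟨main, hane, hG1s.1, hG1s.2, ?_, ?_⟩
  · rw [Matrix.smul_apply, smul_eq_mul, inv_mul_cancel₀ hane]
  · rw [Matrix.smul_kronecker, Matrix.kronecker_smul, smul_smul, inv_mul_cancel₀ hane, one_smul]

end
end

section
/- Let Q ∈ ℝ^{p×p} and H ∈ ℝ^{k×k} be orthogonal matrices (QᵀQ = I_p, HᵀH = I_k). Then for every A ∈ ℝ^{kp×kp}, R( (Q ⊗ H) A (Q ⊗ H)ᵀ ) = (Q ⊗ Q) · R(A) · (H ⊗ H)ᵀ. -/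
open Matrix
open scoped Kronecker

noncomputable section

/-- for orthogonal `Q ∈ ℝ^{p×p}` and `H ∈ ℝ^{k×k}` and any `A ∈ ℝ^{kp×kp}`,
`R((Q ⊗ H) A (Q ⊗ H)ᵀ) = (Q ⊗ Q) · R(A) · (H ⊗ H)ᵀ`. -/
theorem rearr_orthogonal_conjugation {p k : ℕ}
    (Q : Matrix (Fin p) (Fin p) ℝ) (H : Matrix (Fin k) (Fin k) ℝ)
    (hQ : Qᵀ * Q = 1) (hH : Hᵀ * H = 1)
    (A : Matrix (Fin p × Fin k) (Fin p × Fin k) ℝ) :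
    rearr ((Q ⊗ₖ H) * A * (Q ⊗ₖ H)ᵀ) = (Q ⊗ₖ Q) * rearr A * (H ⊗ₖ H)ᵀ := by
  ext ⟨q1, q2⟩ ⟨r1, r2⟩
  simp only [rearr, Matrix.of_apply, mul_apply, kroneckerMap_apply, transpose_apply,
    Finset.sum_mul, Finset.mul_sum]
  rw [← Finset.sum_product', ← Finset.sum_product', Finset.univ_product_univ,
    Finset.univ_product_univ]
  apply Fintype.sum_equiv
    (⟨fun y => ((y.1.2, y.2.2), (y.1.1, y.2.1)),
      fun x => ((x.2.1, x.1.1), (x.2.2, x.1.2)),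
      fun _ => rfl, fun _ => rfl⟩ :
      ((Fin p × Fin k) × (Fin p × Fin k)) ≃ ((Fin k × Fin k) × (Fin p × Fin p)))
  rintro ⟨⟨a1, a2⟩, ⟨b1, b2⟩⟩
  simp only [Equiv.coe_fn_mk]
  ring

end
end

section
/- Let Q ∈ ℝ^{p×p} and H ∈ ℝ^{k×k} be orthogonal matrices. Then for every A ∈ ℝ^{kp×kp}, the singular values of R( (Q ⊗ H) A (Q ⊗ H)ᵀ ) coincide (with multiplicity, in nonincreasing order) with the singular values of R(A). Consequently, the Frobenius distance of the rearranged matrix to the set of rank-one matrices is invariant under simultaneous orthonormal transformations of the two Kronecker factors of the data. -/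
open Matrix
open scoped Kronecker BigOperators

noncomputable section

open Polynomial in
/-- The characteristic polynomial is invariant under conjugation by an orthogonal matrix. -/
lemma charpoly_conj_orth {n : Type*} [Fintype n] [DecidableEq n] (V N : Matrix n n ℝ)
    (hV : Vᵀ * V = 1) : (V * N * Vᵀ).charpoly = N.charpoly := by
  have hV' : V * Vᵀ = 1 := mul_eq_one_comm.mp hV
  have hmap : ∀ M₁ M₂ : Matrix n n ℝ, (M₁ * M₂).map (C : ℝ → ℝ[X]) =
      M₁.map C * M₂.map C := fun M₁ M₂ => Matrix.map_mul
  have hone : (1 : Matrix n n ℝ).map (C : ℝ → ℝ[X]) = 1 := by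
    ext i j; by_cases h : i = j <;> simp [h, Matrix.one_apply]
  have key : charmatrix (V * N * Vᵀ)
      = V.map (C : ℝ → ℝ[X]) * charmatrix N * (Vᵀ).map (C : ℝ → ℝ[X]) := by
    simp only [charmatrix, RingHom.mapMatrix_apply, mul_sub, sub_mul]
    congr 1
    · have hsc : (Matrix.scalar n (X : ℝ[X])) = (X : ℝ[X]) • (1 : Matrix n n ℝ[X]) := by
        rw [Matrix.smul_one_eq_diagonal]; rfl
      rw [hsc, Matrix.mul_smul, Matrix.smul_mul, mul_one, ← hmap, hV', hone]
    · rw [← hmap, ← hmap]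
  rw [Matrix.charpoly, key, det_mul, det_mul, Matrix.charpoly]
  have hdet : (V.map (C : ℝ → ℝ[X])).det * ((Vᵀ).map (C : ℝ → ℝ[X])).det = 1 := by
    rw [← det_mul, ← hmap, hV', hone, det_one]
  calc (V.map (C : ℝ → ℝ[X])).det * (charmatrix N).det * ((Vᵀ).map (C : ℝ → ℝ[X])).det
      = (charmatrix N).det * ((V.map (C : ℝ → ℝ[X])).det * ((Vᵀ).map (C : ℝ → ℝ[X])).det) := by
        ring
    _ = (charmatrix N).det := by rw [hdet, mul_one]

open Polynomial in
/-- The characteristic polynomial of a real symmetric matrix is the product of the linear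
factors given by its eigenvalues. -/
lemma charpoly_hermitian {n : Type*} [Fintype n] [DecidableEq n] {N : Matrix n n ℝ}
    (hN : N.IsHermitian) : N.charpoly = ∏ i : n, (X - C (hN.eigenvalues i)) := by
  have hsp := hN.spectral_theorem
  have hW : ((hN.eigenvectorUnitary : Matrix n n ℝ))ᵀ * (hN.eigenvectorUnitary : Matrix n n ℝ)
      = 1 := by
    have := (Matrix.mem_unitaryGroup_iff'.mp hN.eigenvectorUnitary.2)
    simpa [star_eq_conjTranspose, conjTranspose_eq_transpose_of_trivial] using this
  have hdiag : (Matrix.diagonal (RCLike.ofReal ∘ hN.eigenvalues) : Matrix n n ℝ).charpoly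
      = ∏ i : n, (X - C (hN.eigenvalues i)) := by
    rw [Matrix.charpoly]
    have : charmatrix (Matrix.diagonal (RCLike.ofReal ∘ hN.eigenvalues) : Matrix n n ℝ)
        = Matrix.diagonal fun i => (X - C (hN.eigenvalues i)) := by
      ext i j
      by_cases h : i = j
      · subst h; simp
      · simp [h]
    rw [this, det_diagonal]
  calc N.charpoly
      = ((hN.eigenvectorUnitary : Matrix n n ℝ) *
          Matrix.diagonal (RCLike.ofReal ∘ hN.eigenvalues) *
          (hN.eigenvectorUnitary : Matrix n n ℝ)ᵀ).charpoly := by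
        conv_lhs => rw [hsp]
        congr 1
    _ = _ := by rw [charpoly_conj_orth _ _ hW, hdiag]

/-- Two tuples with the same multiset of values have the same nonincreasing rearrangement. -/
lemma sortedDesc_congr {n : ℕ} {f g : Fin n → ℝ}
    (h : Multiset.map f Finset.univ.val = Multiset.map g Finset.univ.val) :
    sortedDesc f = sortedDesc g := by
  have hperm : (List.ofFn f).Perm (List.ofFn g) := by
    rw [← Multiset.coe_eq_coe]
    simpa [List.ofFn_eq_map, Fin.univ_def, ← Multiset.map_coe] using h
  have hsorted : f ∘ Tuple.sort f = g ∘ Tuple.sort g := by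
    apply List.ofFn_injective
    refine List.Perm.eq_of_sortedLE (Tuple.monotone_sort f).sortedLE_ofFn
      (Tuple.monotone_sort g).sortedLE_ofFn ?_
    exact (((Tuple.sort f).ofFn_comp_perm f).trans hperm).trans
      ((Tuple.sort g).ofFn_comp_perm g).symm
  funext i
  simp only [sortedDesc, hsorted]

open Polynomial in
/-- The roots of the characteristic polynomial of a real symmetric matrix form the multiset
of its eigenvalues. -/
lemma eig_roots {n : Type*} [Fintype n] [DecidableEq n] {N : Matrix n n ℝ}
    (hN : N.IsHermitian) (hcp : N.charpoly = ∏ i : n, (X - C (hN.eigenvalues i))) :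
    N.charpoly.roots = Multiset.map hN.eigenvalues Finset.univ.val := by
  rw [hcp]
  have : (∏ i : n, (X - C (hN.eigenvalues i)))
      = ((Finset.univ.val.map hN.eigenvalues).map fun a => X - C a).prod := by
    rw [Multiset.map_map]
    rfl
  rw [this, Polynomial.roots_multiset_prod_X_sub_C]

/-- `eigenvalues₀` and `eigenvalues` have equal multisets of values. -/
lemma eig0_multiset {n : Type*} [Fintype n] [DecidableEq n] {N : Matrix n n ℝ}
    (hN : N.IsHermitian) :
    Multiset.map hN.eigenvalues₀ Finset.univ.val
      = Multiset.map hN.eigenvalues Finset.univ.val := by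
  set e := (Fintype.equivOfCardEq (Fintype.card_fin (Fintype.card n)) :
      Fin (Fintype.card n) ≃ n)
  calc Multiset.map hN.eigenvalues₀ Finset.univ.val
      = Multiset.map hN.eigenvalues₀ ((Finset.univ.map e.symm.toEmbedding).val) := by
        rw [Finset.map_univ_equiv]
    _ = Multiset.map hN.eigenvalues Finset.univ.val := by
        rw [Finset.map_val, Multiset.map_map]
        rfl

/-- Singular values are invariant under two-sided orthogonal transformations. -/
lemma svals_conj {m n : Type*} [Fintype m] [Fintype n] [DecidableEq m] [DecidableEq n]
    (U : Matrix m m ℝ) (V : Matrix n n ℝ) (M : Matrix m n ℝ)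
    (hU : Uᵀ * U = 1) (hV : Vᵀ * V = 1) :
    svals (U * M * Vᵀ) = svals M := by
  have hsim : (U * M * Vᵀ)ᵀ * (U * M * Vᵀ) = V * (Mᵀ * M) * Vᵀ := by
    calc (U * M * Vᵀ)ᵀ * (U * M * Vᵀ)
        = V * (Mᵀ * ((Uᵀ * U) * M)) * Vᵀ := by
          simp only [Matrix.transpose_mul, Matrix.transpose_transpose]
          simp only [Matrix.mul_assoc]
      _ = V * (Mᵀ * M) * Vᵀ := by rw [hU, Matrix.one_mul]
  have h1 : ((U * M * Vᵀ)ᵀ * (U * M * Vᵀ)).IsHermitian := by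
    simpa [Matrix.conjTranspose_eq_transpose_of_trivial] using
      Matrix.isHermitian_conjTranspose_mul_self (U * M * Vᵀ)
  have h2 : (Mᵀ * M).IsHermitian := by
    simpa [Matrix.conjTranspose_eq_transpose_of_trivial] using
      Matrix.isHermitian_conjTranspose_mul_self M
  have hcp : ((U * M * Vᵀ)ᵀ * (U * M * Vᵀ)).charpoly = (Mᵀ * M).charpoly := by
    rw [hsim]; exact charpoly_conj_orth V (Mᵀ * M) hV
  have hmult : Multiset.map h1.eigenvalues₀ Finset.univ.val
      = Multiset.map h2.eigenvalues₀ Finset.univ.val := by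
    rw [eig0_multiset h1, eig0_multiset h2,
      ← eig_roots h1 (charpoly_hermitian h1), ← eig_roots h2 (charpoly_hermitian h2), hcp]
  unfold svals
  apply sortedDesc_congr
  calc Multiset.map (fun i => Real.sqrt (h1.eigenvalues₀ i)) Finset.univ.val
      = Multiset.map Real.sqrt (Multiset.map h1.eigenvalues₀ Finset.univ.val) := by
        rw [Multiset.map_map]; rfl
    _ = Multiset.map Real.sqrt (Multiset.map h2.eigenvalues₀ Finset.univ.val) := by rw [hmult]
    _ = Multiset.map (fun i => Real.sqrt (h2.eigenvalues₀ i)) Finset.univ.val := by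
        rw [Multiset.map_map]; rfl

/-- The Frobenius norm is invariant under two-sided orthogonal transformations. -/
lemma frobNorm_conj {m n : Type*} [Fintype m] [Fintype n] [DecidableEq m] [DecidableEq n]
    (U : Matrix m m ℝ) (V : Matrix n n ℝ) (M : Matrix m n ℝ)
    (hU : Uᵀ * U = 1) (hV : Vᵀ * V = 1) :
    frobNorm (U * M * Vᵀ) = frobNorm M := by
  unfold frobNorm
  congr 1
  have hsim : (U * M * Vᵀ)ᵀ * (U * M * Vᵀ) = V * (Mᵀ * M) * Vᵀ := by
    calc (U * M * Vᵀ)ᵀ * (U * M * Vᵀ)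
        = V * (Mᵀ * ((Uᵀ * U) * M)) * Vᵀ := by
          simp only [Matrix.transpose_mul, Matrix.transpose_transpose]
          simp only [Matrix.mul_assoc]
      _ = V * (Mᵀ * M) * Vᵀ := by rw [hU, Matrix.one_mul]
  rw [hsim, Matrix.trace_mul_cycle, ← Matrix.mul_assoc, hV, Matrix.one_mul]

/-- The set of Frobenius distances to rank-≤1 matrices is invariant under two-sided
orthogonal transformations. -/
lemma rankset_conj {m n : Type*} [Fintype m] [Fintype n] [DecidableEq m] [DecidableEq n]
    (U : Matrix m m ℝ) (V : Matrix n n ℝ) (R : Matrix m n ℝ)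
    (hU : Uᵀ * U = 1) (hV : Vᵀ * V = 1) :
    {x : ℝ | ∃ B : Matrix m n ℝ, B.rank ≤ 1 ∧ x = frobNorm (U * R * Vᵀ - B)} =
      {x : ℝ | ∃ B : Matrix m n ℝ, B.rank ≤ 1 ∧ x = frobNorm (R - B)} := by
  have hU' : U * Uᵀ = 1 := mul_eq_one_comm.mp hU
  have hV' : V * Vᵀ = 1 := mul_eq_one_comm.mp hV
  ext x
  simp only [Set.mem_setOf_eq]
  constructor
  · rintro ⟨B, hB, rfl⟩
    refine ⟨Uᵀ * B * V, ?_, ?_⟩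
    · calc (Uᵀ * B * V).rank ≤ (B * V).rank := by
            rw [Matrix.mul_assoc]; exact Matrix.rank_mul_le_right _ _
        _ ≤ B.rank := Matrix.rank_mul_le_left _ _
        _ ≤ 1 := hB
    · have hBeq : U * (Uᵀ * B * V) * Vᵀ = B := by
        calc U * (Uᵀ * B * V) * Vᵀ = (U * Uᵀ) * B * (V * Vᵀ) := by
              simp only [Matrix.mul_assoc]
          _ = B := by rw [hU', hV', Matrix.one_mul, Matrix.mul_one]
      calc frobNorm (U * R * Vᵀ - B)
          = frobNorm (U * (R - (Uᵀ * B * V)) * Vᵀ) := by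
            rw [Matrix.mul_sub, Matrix.sub_mul, hBeq]
        _ = frobNorm (R - (Uᵀ * B * V)) := frobNorm_conj U V _ hU hV
  · rintro ⟨B, hB, rfl⟩
    refine ⟨U * B * Vᵀ, ?_, ?_⟩
    · calc (U * B * Vᵀ).rank ≤ (B * Vᵀ).rank := by
            rw [Matrix.mul_assoc]; exact Matrix.rank_mul_le_right _ _
        _ ≤ B.rank := Matrix.rank_mul_le_left _ _
        _ ≤ 1 := hB
    · calc frobNorm (R - B) = frobNorm (U * (R - B) * Vᵀ) := (frobNorm_conj U V _ hU hV).symm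
        _ = frobNorm (U * R * Vᵀ - U * B * Vᵀ) := by rw [Matrix.mul_sub, Matrix.sub_mul]

/-- Rearrangement intertwines Kronecker conjugation: `R((Q⊗H)A(Q⊗H)ᵀ) = (Q⊗Q) R(A) (H⊗H)ᵀ`. -/
lemma rearr_conj {p k : ℕ} (Q : Matrix (Fin p) (Fin p) ℝ) (H : Matrix (Fin k) (Fin k) ℝ)
    (A : Matrix (Fin p × Fin k) (Fin p × Fin k) ℝ) :
    rearr ((Q ⊗ₖ H) * A * (Q ⊗ₖ H)ᵀ) = (Q ⊗ₖ Q) * rearr A * (H ⊗ₖ H)ᵀ := by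
  ext ⟨i, j⟩ ⟨a, b⟩
  simp only [rearr, Matrix.of_apply, Matrix.mul_apply, Matrix.transpose_apply,
    Matrix.kroneckerMap_apply, Finset.sum_mul, Fintype.sum_prod_type]
  have e1 : ∑ z : Fin p × Fin k × Fin p × Fin k,
      Q j z.2.2.1 * H b z.2.2.2 * A (z.2.2.1, z.2.2.2) (z.1, z.2.1) * (Q i z.1 * H a z.2.1)
      = ∑ x : Fin p, ∑ x1 : Fin k, ∑ x2 : Fin p, ∑ x3 : Fin k,
          Q j x2 * H b x3 * A (x2, x3) (x, x1) * (Q i x * H a x1) := by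
    rw [Fintype.sum_prod_type]
    refine Finset.sum_congr rfl fun x _ => ?_
    rw [Fintype.sum_prod_type]
    refine Finset.sum_congr rfl fun x1 _ => ?_
    rw [Fintype.sum_prod_type]
  have e2 : ∑ z : Fin k × Fin k × Fin p × Fin p,
      Q i z.2.2.1 * Q j z.2.2.2 * A (z.2.2.2, z.2.1) (z.2.2.1, z.1) * (H a z.1 * H b z.2.1)
      = ∑ x : Fin k, ∑ x1 : Fin k, ∑ x2 : Fin p, ∑ x3 : Fin p,
          Q i x2 * Q j x3 * A (x3, x1) (x2, x) * (H a x * H b x1) := by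
    rw [Fintype.sum_prod_type]
    refine Finset.sum_congr rfl fun x _ => ?_
    rw [Fintype.sum_prod_type]
    refine Finset.sum_congr rfl fun x1 _ => ?_
    rw [Fintype.sum_prod_type]
  rw [← e1, ← e2]
  refine Fintype.sum_equiv ⟨fun z => (z.2.1, (z.2.2.2, (z.1, z.2.2.1))),
    fun w => (w.2.2.1, (w.1, (w.2.2.2, w.2.1))), fun z => rfl, fun w => rfl⟩ _ _ fun z => by
    simp only [Equiv.coe_fn_mk]; ring

/-- for orthogonal `Q` and `H`, the singular values (in nonincreasing order,
with multiplicity) of `R((Q ⊗ H) A (Q ⊗ H)ᵀ)` coincide with those of `R(A)`; consequently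
the Frobenius distance of the rearranged matrix to the set of rank-one matrices is
invariant under such transformations. -/
theorem svals_rearr_orthogonal_invariant {p k : ℕ}
    (Q : Matrix (Fin p) (Fin p) ℝ) (H : Matrix (Fin k) (Fin k) ℝ)
    (hQ : Qᵀ * Q = 1) (hH : Hᵀ * H = 1)
    (A : Matrix (Fin p × Fin k) (Fin p × Fin k) ℝ) :
    svals (rearr ((Q ⊗ₖ H) * A * (Q ⊗ₖ H)ᵀ)) = svals (rearr A) ∧
    sInf {x : ℝ | ∃ B : Matrix (Fin p × Fin p) (Fin k × Fin k) ℝ, B.rank ≤ 1 ∧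
        x = frobNorm (rearr ((Q ⊗ₖ H) * A * (Q ⊗ₖ H)ᵀ) - B)} =
      sInf {x : ℝ | ∃ B : Matrix (Fin p × Fin p) (Fin k × Fin k) ℝ, B.rank ≤ 1 ∧
        x = frobNorm (rearr A - B)} := by
  have hQQ : (Q ⊗ₖ Q)ᵀ * (Q ⊗ₖ Q) = 1 := by
    rw [← Matrix.kroneckerMap_transpose, ← Matrix.mul_kronecker_mul, hQ,
      Matrix.one_kronecker_one]
  have hHH : (H ⊗ₖ H)ᵀ * (H ⊗ₖ H) = 1 := by
    rw [← Matrix.kroneckerMap_transpose, ← Matrix.mul_kronecker_mul, hH,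
      Matrix.one_kronecker_one]
  rw [rearr_conj]
  exact ⟨svals_conj _ _ _ hQQ hHH, by rw [rankset_conj _ _ _ hQQ hHH]⟩

end
end

section
/- Let m ≥ 2 and let L ∈ ℝ^{m×m} be orthogonal, with first column L_1 ∈ ℝ^m, remaining columns L_2 ∈ ℝ^{m×(m−1)}, and lower-right block L_{22} ∈ ℝ^{(m−1)×(m−1)} assumed invertible. Define P := L_2 L_{22}⁻¹ (L_{22} L_{22}ᵀ)^{1/2}, where (L_{22} L_{22}ᵀ)^{1/2} is the symmetric positive definite square root of L_{22} L_{22}ᵀ. Then P has orthonormal columns, Pᵀ P = I_{m−1}, and P is orthogonal to the first column of L: Pᵀ L_1 = 0. -/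
open Matrix

noncomputable section

/-- let `L ∈ ℝ^{m×m}` (here `m = n+1 ≥ 2`) be orthogonal with first column
`L₁`, remaining columns `L₂`, and invertible lower-right block `L₂₂`.  Then
`P := L₂ L₂₂⁻¹ (L₂₂ L₂₂ᵀ)^{1/2}` has orthonormal columns and is orthogonal to `L₁`:
`Pᵀ P = I` and `Pᵀ L₁ = 0`.  (Here `(L₂₂ L₂₂ᵀ)^{1/2}` is the unique symmetric positive
definite square root, formalized by quantifying over all symmetric positive definite `S`
with `S * S = L₂₂ L₂₂ᵀ`.) -/
theorem orthogonal_complement_columns {n : ℕ} (hn : 1 ≤ n)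
    (L : Matrix (Fin (n + 1)) (Fin (n + 1)) ℝ)
    (hL : Lᵀ * L = 1) (hL' : L * Lᵀ = 1)
    (hU : IsUnit (L.submatrix Fin.succ Fin.succ)) :
    ∀ S : Matrix (Fin n) (Fin n) ℝ, S.PosDef →
      S * S = (L.submatrix Fin.succ Fin.succ) * (L.submatrix Fin.succ Fin.succ)ᵀ →
      ((L.submatrix id Fin.succ * (L.submatrix Fin.succ Fin.succ)⁻¹ * S)ᵀ *
          (L.submatrix id Fin.succ * (L.submatrix Fin.succ Fin.succ)⁻¹ * S) = 1 ∧
        (L.submatrix id Fin.succ * (L.submatrix Fin.succ Fin.succ)⁻¹ * S)ᵀ.mulVec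
          (fun i => L i 0) = 0) := by
  intro S hS hSS
  set L2 : Matrix (Fin (n+1)) (Fin n) ℝ := L.submatrix id Fin.succ with hL2
  set L22 : Matrix (Fin n) (Fin n) ℝ := L.submatrix Fin.succ Fin.succ with hL22
  -- columns of L2 orthonormal
  have h1 : L2ᵀ * L2 = 1 := by
    ext a b
    have h := Matrix.ext_iff.mpr hL a.succ b.succ
    simp only [Matrix.mul_apply, Matrix.transpose_apply, Matrix.one_apply,
      Fin.succ_inj] at h ⊢
    simpa [hL2, Matrix.submatrix_apply] using h
  have h2 : L2ᵀ.mulVec (fun i => L i 0) = 0 := by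
    funext a
    have h := Matrix.ext_iff.mpr hL a.succ 0
    simp only [Matrix.mul_apply, Matrix.transpose_apply, Matrix.one_apply,
      (Fin.succ_ne_zero a), if_false] at h
    simpa [Matrix.mulVec, dotProduct, hL2, Matrix.submatrix_apply] using h
  have hSdet : IsUnit S.det := isUnit_iff_ne_zero.mpr (ne_of_gt hS.det_pos)
  have hSsymm : Sᵀ = S := hS.1.eq
  have hinv : (L22⁻¹)ᵀ * L22⁻¹ = S⁻¹ * S⁻¹ := by
    rw [Matrix.transpose_nonsing_inv, ← Matrix.mul_inv_rev, ← hSS, Matrix.mul_inv_rev]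
  constructor
  · calc (L2 * L22⁻¹ * S)ᵀ * (L2 * L22⁻¹ * S)
        = S * (((L22⁻¹)ᵀ * (L2ᵀ * L2) * L22⁻¹) * S) := by
          simp only [Matrix.transpose_mul, hSsymm, Matrix.mul_assoc]
      _ = S * ((S⁻¹ * S⁻¹) * S) := by rw [h1, Matrix.mul_one, hinv]
      _ = 1 := by
          rw [Matrix.mul_assoc, Matrix.nonsing_inv_mul S hSdet, Matrix.mul_one,
            Matrix.mul_nonsing_inv S hSdet]
  · have : (L2 * L22⁻¹ * S)ᵀ = S * (L22⁻¹)ᵀ * L2ᵀ := by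
      simp only [Matrix.transpose_mul, hSsymm, Matrix.mul_assoc]
    rw [this, Matrix.mul_assoc, ← Matrix.mulVec_mulVec, ← Matrix.mulVec_mulVec, h2,
      Matrix.mulVec_zero, Matrix.mulVec_zero]

end
end

section
/- Let M ∈ ℝ^{m×n} (m, n ≥ 2) have a singular value decomposition M = L Σ Nᵀ with L ∈ ℝ^{m×m} and N ∈ ℝ^{n×n} orthogonal and Σ ∈ ℝ^{m×n} rectangular-diagonal with nonincreasing nonnegative diagonal entries. Partition L = (L_1 ⋮ L_2), N = (N_1 ⋮ N_2) into first columns and the remaining columns, let L_{22} ∈ ℝ^{(m−1)×(m−1)} and N_{22} ∈ ℝ^{(n−1)×(n−1)} be the lower-right blocks of L and N, assumed invertible, and let Σ_2 ∈ ℝ^{(m−1)×(n−1)} be the lower-right block of Σ. Define Λ := (L_{22} L_{22}ᵀ)^{−1/2} L_{22} Σ_2 N_{22}ᵀ (N_{22} N_{22}ᵀ)^{−1/2}, P := L_2 L_{22}⁻¹ (L_{22} L_{22}ᵀ)^{1/2}, and Q := N_2 N_{22}⁻¹ (N_{22} N_{22}ᵀ)^{1/2}. Then Λ = Pᵀ M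 Q. -/
open Matrix

noncomputable section

/-- Selector matrix deleting the first row. -/
def Esel (k : ℕ) : Matrix (Fin k) (Fin (k + 1)) ℝ :=
  fun i j => if (i.succ : Fin (k + 1)) = j then 1 else 0

lemma Esel_mul {k : ℕ} {ι : Type*} [Fintype ι] (A : Matrix (Fin (k + 1)) ι ℝ) :
    Esel k * A = A.submatrix Fin.succ id := by
  ext i j
  simp [Esel, Matrix.mul_apply]

lemma mul_Esel_t {k : ℕ} {ι : Type*} [Fintype ι] (A : Matrix ι (Fin (k + 1)) ℝ) :
    A * (Esel k)ᵀ = A.submatrix id Fin.succ := by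
  ext i j
  simp [Esel, Matrix.mul_apply]

lemma Esel_mul_Esel_t {k l : ℕ} (A : Matrix (Fin (k + 1)) (Fin (l + 1)) ℝ) :
    Esel k * A * (Esel l)ᵀ = A.submatrix Fin.succ Fin.succ := by
  rw [mul_Esel_t, Esel_mul]
  rfl

theorem lambda_eq_PtMQ {m n : ℕ} (hm : 1 ≤ m) (hn : 1 ≤ n)
    (M : Matrix (Fin (m + 1)) (Fin (n + 1)) ℝ)
    (L : Matrix (Fin (m + 1)) (Fin (m + 1)) ℝ)
    (N : Matrix (Fin (n + 1)) (Fin (n + 1)) ℝ)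
    (S : Matrix (Fin (m + 1)) (Fin (n + 1)) ℝ)
    (hM : M = L * S * Nᵀ)
    (hL : Lᵀ * L = 1) (hL' : L * Lᵀ = 1)
    (hN : Nᵀ * N = 1) (hN' : N * Nᵀ = 1)
    (hdiag : ∀ (i : Fin (m + 1)) (j : Fin (n + 1)), (i : ℕ) ≠ (j : ℕ) → S i j = 0)
    (hnonneg : ∀ (i : Fin (m + 1)) (j : Fin (n + 1)), (i : ℕ) = (j : ℕ) → 0 ≤ S i j)
    (hord : ∀ (i i' : Fin (m + 1)) (j j' : Fin (n + 1)),
      (i : ℕ) = (j : ℕ) → (i' : ℕ) = (j' : ℕ) → (i : ℕ) ≤ (i' : ℕ) → S i' j' ≤ S i j)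
    (hL22 : IsUnit (L.submatrix Fin.succ Fin.succ))
    (hN22 : IsUnit (N.submatrix Fin.succ Fin.succ)) :
    ∀ S1 : Matrix (Fin m) (Fin m) ℝ, ∀ S2 : Matrix (Fin n) (Fin n) ℝ,
      S1.PosDef → S1 * S1 = (L.submatrix Fin.succ Fin.succ) * (L.submatrix Fin.succ Fin.succ)ᵀ →
      S2.PosDef → S2 * S2 = (N.submatrix Fin.succ Fin.succ) * (N.submatrix Fin.succ Fin.succ)ᵀ →
      S1⁻¹ * (L.submatrix Fin.succ Fin.succ) * (S.submatrix Fin.succ Fin.succ) *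
          (N.submatrix Fin.succ Fin.succ)ᵀ * S2⁻¹ =
        (L.submatrix id Fin.succ * (L.submatrix Fin.succ Fin.succ)⁻¹ * S1)ᵀ * M *
          (N.submatrix id Fin.succ * (N.submatrix Fin.succ Fin.succ)⁻¹ * S2) := by
  intro S1 S2 hS1pd hS1sq hS2pd hS2sq
  set L22 := L.submatrix Fin.succ Fin.succ with hL22def
  set N22 := N.submatrix Fin.succ Fin.succ with hN22def
  have hS1unit : IsUnit S1 := (Matrix.isUnit_iff_isUnit_det S1).2 hS1pd.det_pos.ne'.isUnit
  have hS2unit : IsUnit S2 := (Matrix.isUnit_iff_isUnit_det S2).2 hS2pd.det_pos.ne'.isUnit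
  -- key orthogonality fact: L₂ᵀ M N₂ = Σ₂
  have hkey : (L.submatrix id Fin.succ)ᵀ * M * (N.submatrix id Fin.succ)
      = S.submatrix Fin.succ Fin.succ := by
    rw [← mul_Esel_t L, ← mul_Esel_t N, hM]
    rw [Matrix.transpose_mul, Matrix.transpose_transpose]
    calc Esel m * Lᵀ * (L * S * Nᵀ) * (N * (Esel n)ᵀ)
        = Esel m * (Lᵀ * L) * S * (Nᵀ * N) * (Esel n)ᵀ := by
          simp only [Matrix.mul_assoc]
      _ = Esel m * S * (Esel n)ᵀ := by rw [hL, hN]; simp [Matrix.mul_assoc]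
      _ = S.submatrix Fin.succ Fin.succ := Esel_mul_Esel_t S
  have hdetL : IsUnit L22ᵀ.det := by
    rw [Matrix.det_transpose]; exact (Matrix.isUnit_iff_isUnit_det L22).1 hL22
  have hdetN : IsUnit N22.det := (Matrix.isUnit_iff_isUnit_det N22).1 hN22
  have hA : S1⁻¹ * L22 = S1 * L22ᵀ⁻¹ := by
    have h1 : S1 * S1 * L22ᵀ⁻¹ = L22 := by
      rw [hS1sq, Matrix.mul_assoc, Matrix.mul_nonsing_inv _ hdetL, Matrix.mul_one]
    calc S1⁻¹ * L22 = S1⁻¹ * (S1 * S1 * L22ᵀ⁻¹) := by rw [h1]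
      _ = S1⁻¹ * S1 * (S1 * L22ᵀ⁻¹) := by simp [Matrix.mul_assoc]
      _ = S1 * L22ᵀ⁻¹ := by
          rw [Matrix.nonsing_inv_mul _ ((Matrix.isUnit_iff_isUnit_det S1).1 hS1unit),
            Matrix.one_mul]
  have hB : N22ᵀ * S2⁻¹ = N22⁻¹ * S2 := by
    have h1 : N22 * (N22ᵀ * S2⁻¹) = S2 := by
      rw [← Matrix.mul_assoc, ← hS2sq, Matrix.mul_assoc,
        Matrix.mul_nonsing_inv _ ((Matrix.isUnit_iff_isUnit_det S2).1 hS2unit), Matrix.mul_one]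
    calc N22ᵀ * S2⁻¹ = N22⁻¹ * (N22 * (N22ᵀ * S2⁻¹)) := by
          rw [← Matrix.mul_assoc, Matrix.nonsing_inv_mul _ hdetN, Matrix.one_mul]
      _ = N22⁻¹ * S2 := by rw [h1]
  have hS1symm : S1ᵀ = S1 := hS1pd.1.eq
  calc S1⁻¹ * L22 * S.submatrix Fin.succ Fin.succ * N22ᵀ * S2⁻¹
      = S1 * L22ᵀ⁻¹ * S.submatrix Fin.succ Fin.succ * (N22⁻¹ * S2) := by
        rw [hA, Matrix.mul_assoc _ _ (S2⁻¹), hB, Matrix.mul_assoc]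
    _ = S1 * L22ᵀ⁻¹ * ((L.submatrix id Fin.succ)ᵀ * M * (N.submatrix id Fin.succ)) *
          (N22⁻¹ * S2) := by rw [hkey]
    _ = (L.submatrix id Fin.succ * L22⁻¹ * S1)ᵀ * M *
          (N.submatrix id Fin.succ * (N22⁻¹ * S2)) := by
        rw [Matrix.transpose_mul, Matrix.transpose_mul, Matrix.transpose_nonsing_inv, hS1symm]
        simp only [Matrix.mul_assoc]
    _ = (L.submatrix id Fin.succ * L22⁻¹ * S1)ᵀ * M *
          (N.submatrix id Fin.succ * N22⁻¹ * S2) := by simp only [Matrix.mul_assoc]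

end
end
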